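/- arXiv:2504.02238 — 5 statements merged into one kernel-verified Lean document; each statement's English description precedes it below -/
import Mathlib

section
/- Imprecision attenuates updating (Theorem 1, sufficiency). Let f_X be a log-concave density symmetric about its mean μ, and let f and g be quasi-concave densities symmetric about 0 such that g is less precise than f. Denote by E_f[X|S=s] and E_g[X|S=s] the posterior means given signal realization s under prior f_X and noise densities f and g respectively. Then for every s ≤ μ one has E_f[X|S=s] ≤ E_g[X|S=s] ≤ μ, and for every s ≥ μ one has E_f[X|S=s] ≥ E_g[X|S=s] ≥ μ. -/
open MeasureTheory Real Set

noncomputable section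

/-- A density: everywhere positive, continuously differentiable, integrates to 1,
with finite first absolute moment. -/
def IsDensity (f : ℝ → ℝ) : Prop :=
  (∀ x, 0 < f x) ∧ ContDiff ℝ 1 f ∧ (∫ x, f x) = 1 ∧
    MeasureTheory.Integrable (fun x => |x| * f x)

/-- `f` is symmetric about `m`. -/
def SymmAbout (m : ℝ) (f : ℝ → ℝ) : Prop := ∀ x, f (m + x) = f (m - x)

/-- `f` is quasi-concave. -/
def QuasiConcaveFn (f : ℝ → ℝ) : Prop :=
  ∀ x y t : ℝ, 0 ≤ t → t ≤ 1 → min (f x) (f y) ≤ f (t * x + (1 - t) * y)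

/-- `f` is log-concave. -/
def LogConcaveFn (f : ℝ → ℝ) : Prop := ConcaveOn ℝ Set.univ fun x => Real.log (f x)

/-- `g` is less precise than `f`: the ratio `g/f` is nondecreasing on `(0, ∞)`. -/
def LessPrecise (g f : ℝ → ℝ) : Prop := MonotoneOn (fun x => g x / f x) (Set.Ioi 0)

/-- Posterior mean at signal realization `s` under prior `fX` and noise density `fε`. -/
def postMean (fX fε : ℝ → ℝ) (s : ℝ) : ℝ :=
  (∫ x, x * fX x * fε (s - x)) / (∫ x, fX x * fε (s - x))

/-!
Writing `q u = f_X (s + u)`, the posterior mean at `s` is `s` plus the mean of `u` under the weight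
`q · h`, where `h` is the noise density. For `s ≤ μ` the weight `q` is log-concave and symmetric
about `μ - s ≥ 0`, so for its symmetrizations `A u = q u + q (-u)` and `B u = u q u - u q (-u)` the
ratio `B / A` is nondecreasing on `[0, ∞)`, as is `g / f`. Swapping the variables of the double
integral of `B u * A v * (f u * g v - g u * f v)` turns these two monotonicities into the comparison
of the posterior means, and reflecting `q` about `μ - s` puts the posterior mean below `μ`. The
case `s ≥ μ` is the mirror image.
-/

section Symmetrization

variable {α : Type*} [MeasurableSpace α] {μ : Measure α}

theorem integral_nonpos_of_add_comp_nonpos {σ : α → α} (hσ : MeasurePreserving σ μ μ)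
    (hσe : MeasurableEmbedding σ) {F : α → ℝ} (hF : ∀ x, F x + F (σ x) ≤ 0) :
    ∫ x, F x ∂μ ≤ 0 := by
  by_cases hint : Integrable F μ
  · have htwice : ∫ x, (F x + F (σ x)) ∂μ = 2 * ∫ x, F x ∂μ := by
      have hintσ : Integrable (fun x => F (σ x)) μ := (hσ.integrable_comp_emb hσe).2 hint
      rw [integral_add hint hintσ, hσ.integral_comp hσe]
      ring
    linarith [integral_nonpos (μ := μ) hF]
  · rw [integral_undef hint]

theorem integral_mul_integral_le_of_mul_sub_mul_nonpos [SFinite μ] {a b c d : α → ℝ}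
    (hac : Integrable (fun x => a x * c x) μ) (hbd : Integrable (fun x => b x * d x) μ)
    (had : Integrable (fun x => a x * d x) μ) (hbc : Integrable (fun x => b x * c x) μ)
    (h : ∀ x y, (a x * b y - a y * b x) * (c x * d y - c y * d x) ≤ 0) :
    (∫ x, a x * c x ∂μ) * (∫ x, b x * d x ∂μ) ≤ (∫ x, a x * d x ∂μ) * ∫ x, b x * c x ∂μ := by
  have hswap := integral_nonpos_of_add_comp_nonpos (μ := μ.prod μ)
    Measure.measurePreserving_swap MeasurableEquiv.prodComm.measurableEmbedding
    (F := fun z => a z.1 * c z.1 * (b z.2 * d z.2) - a z.1 * d z.1 * (b z.2 * c z.2))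
    fun z => by simp only [Prod.fst_swap, Prod.snd_swap]; linarith [h z.1 z.2]
  rw [integral_sub (hac.mul_prod hbd) (had.mul_prod hbc),
    integral_prod_mul (fun x => a x * c x) (fun y => b y * d y),
    integral_prod_mul (fun x => a x * d x) (fun y => b y * c y)] at hswap
  linarith

theorem integral_add_comp_neg {F : ℝ → ℝ} (hF : Integrable F) :
    ∫ x, (F x + F (-x)) = 2 * ∫ x, F x := by
  rw [integral_add hF hF.comp_neg, integral_neg_eq_self]
  ring

end Symmetrization

theorem Function.Even.apply_abs {β : Type*} {f : ℝ → β} (hf : f.Even) (x : ℝ) : f |x| = f x := by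
  rcases abs_choice x with h | h <;> rw [h]
  exact hf x

theorem mul_sub_mul_mul_nonpos_of_even {a b c d : ℝ → ℝ} (ha : a.Even) (hb : b.Even)
    (hc : c.Even) (hd : d.Even)
    (h : ∀ u v, 0 ≤ v → v ≤ u → (a u * b v - a v * b u) * (c u * d v - c v * d u) ≤ 0)
    (u v : ℝ) : (a u * b v - a v * b u) * (c u * d v - c v * d u) ≤ 0 := by
  rw [← ha.apply_abs u, ← ha.apply_abs v, ← hb.apply_abs u, ← hb.apply_abs v,
    ← hc.apply_abs u, ← hc.apply_abs v, ← hd.apply_abs u, ← hd.apply_abs v]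
  rcases le_total |v| |u| with hvu | huv
  · exact h _ _ (abs_nonneg v) hvu
  · linarith [h _ _ (abs_nonneg u) huv]

theorem SymmAbout.even {h : ℝ → ℝ} (hh : SymmAbout 0 h) : h.Even := fun x => by
  simpa using (hh x).symm

theorem SymmAbout.apply_two_mul_sub {h : ℝ → ℝ} {m : ℝ} (hh : SymmAbout m h) (x : ℝ) :
    h (2 * m - x) = h x := by
  rw [show 2 * m - x = m + (m - x) by ring, hh, sub_sub_cancel]

theorem SymmAbout.comp_neg {h : ℝ → ℝ} {m : ℝ} (hh : SymmAbout m h) :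
    SymmAbout (-m) fun x => h (-x) := fun x => by
  simp only [neg_neg, neg_sub', sub_neg_eq_add, ← sub_eq_neg_add]
  exact (hh x).symm

theorem QuasiConcaveFn.min_le_of_mem_uIcc {h : ℝ → ℝ} (hh : QuasiConcaveFn h) {x y z : ℝ}
    (hz : z ∈ uIcc x y) : min (h x) (h y) ≤ h z := by
  rw [← segment_eq_uIcc] at hz
  obtain ⟨a, b, ha, hb, hab, rfl⟩ := hz
  rw [show b = 1 - a by linarith]
  exact hh x y a ha (by linarith)

theorem QuasiConcaveFn.le_of_abs_sub_le {h : ℝ → ℝ} {m : ℝ} (hh : QuasiConcaveFn h)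
    (hsym : SymmAbout m h) {x y : ℝ} (hxy : |x - m| ≤ |y - m|) : h y ≤ h x := by
  have hx : x ∈ uIcc y (2 * m - y) := by
    rw [mem_uIcc]
    rcases abs_le.1 hxy with ⟨h₁, h₂⟩
    rcases le_total m y with hy | hy
    · rw [abs_of_nonneg (by linarith)] at h₁ h₂
      right; constructor <;> linarith
    · rw [abs_of_nonpos (by linarith)] at h₁ h₂
      left; constructor <;> linarith
  simpa [hsym.apply_two_mul_sub] using hh.min_le_of_mem_uIcc hx

theorem LogConcaveFn.quasiConcaveFn {f : ℝ → ℝ} (hpos : ∀ x, 0 < f x) (hf : LogConcaveFn f) :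
    QuasiConcaveFn f := by
  intro x y t ht₀ ht₁
  have hz : t * x + (1 - t) * y ∈ segment ℝ x y := ⟨t, 1 - t, ht₀, by linarith, by ring, rfl⟩
  have := hf.min_le_of_mem_segment (mem_univ x) (mem_univ y) hz
  rw [min_le_iff] at this ⊢
  simpa only [log_le_log_iff (hpos _) (hpos _)] using this

theorem LogConcaveFn.comp_neg {f : ℝ → ℝ} (hf : LogConcaveFn f) :
    LogConcaveFn fun x => f (-x) := by
  unfold LogConcaveFn at *
  simpa [Function.comp_def] using hf.comp_linearMap (-LinearMap.id)

theorem LogConcaveFn.comp_add_left {f : ℝ → ℝ} (hf : LogConcaveFn f) (s : ℝ) :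
    LogConcaveFn fun x => f (s + x) := by
  unfold LogConcaveFn at *
  simpa [Function.comp_def] using hf.translate_right s

theorem LogConcaveFn.mul_le_mul_of_le_of_le {f : ℝ → ℝ} (hpos : ∀ x, 0 < f x)
    (hf : LogConcaveFn f) {a b c d : ℝ} (hac : a ≤ c) (hcb : c ≤ b) (hd : c + d = a + b) :
    f a * f b ≤ f c * f d := by
  rcases eq_or_lt_of_le (hac.trans hcb) with hab | hab
  · obtain rfl : c = a := le_antisymm (hab ▸ hcb) hac
    obtain rfl : d = b := by linarith
    rfl
  set t := (b - c) / (b - a)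
  have ht₀ : 0 ≤ t := div_nonneg (by linarith) (by linarith)
  have ht₁ : t ≤ 1 := (div_le_one (by linarith)).2 (by linarith)
  have hc : t * a + (1 - t) * b = c := by simp only [t]; field_simp; ring
  have hd' : (1 - t) * a + t * b = d := by linarith
  have h₁ := hf.2 (mem_univ a) (mem_univ b) ht₀ (sub_nonneg.2 ht₁) (by ring)
  have h₂ := hf.2 (mem_univ a) (mem_univ b) (sub_nonneg.2 ht₁) ht₀ (by ring)
  simp only [smul_eq_mul, hc, hd'] at h₁ h₂
  rw [← log_le_log_iff (mul_pos (hpos a) (hpos b)) (mul_pos (hpos c) (hpos d)),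
    log_mul (hpos a).ne' (hpos b).ne', log_mul (hpos c).ne' (hpos d).ne']
  linarith

section Weight

variable {q : ℝ → ℝ} {c : ℝ}

theorem LogConcaveFn.apply_neg_le {u : ℝ} (hpos : ∀ x, 0 < q x) (hlc : LogConcaveFn q)
    (hsym : SymmAbout c q) (hc : 0 ≤ c) (hu : 0 ≤ u) : q (-u) ≤ q u :=
  (hlc.quasiConcaveFn hpos).le_of_abs_sub_le hsym <| by
    rw [abs_le, abs_of_nonpos (by linarith : -u - c ≤ 0)]
    constructor <;> linarith

theorem LogConcaveFn.apply_neg_mul_le {u v : ℝ} (hpos : ∀ x, 0 < q x) (hlc : LogConcaveFn q)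
    (hsym : SymmAbout c q) (hc : 0 ≤ c) (hvu : v ≤ u) :
    q (-u) * q v ≤ q u * q (-v) := by
  have hmirror : ∀ x, q (-x) = q (2 * c + x) := fun x => by
    rw [← hsym.apply_two_mul_sub (-x)]; ring_nf
  rw [hmirror, hmirror, mul_comm]
  exact hlc.mul_le_mul_of_le_of_le hpos hvu (by linarith) (by ring)

theorem LogConcaveFn.symmetrized_ratio_le {u v : ℝ} (hpos : ∀ x, 0 < q x)
    (hlc : LogConcaveFn q) (hsym : SymmAbout c q) (hc : 0 ≤ c) (hv : 0 ≤ v) (hvu : v ≤ u) :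
    (v * q v + -v * q (-v)) * (q u + q (-u)) ≤ (u * q u + -u * q (-u)) * (q v + q (-v)) := by
  have hu' := hlc.apply_neg_le hpos hsym hc (hv.trans hvu)
  have hv' := hlc.apply_neg_le hpos hsym hc hv
  have hcross := hlc.apply_neg_mul_le hpos hsym hc hvu
  have hprod : q (-u) * q (-v) ≤ q u * q v :=
    mul_le_mul hu' hv' (hpos _).le (hpos _).le
  nlinarith [mul_nonneg (sub_nonneg.2 hvu) (sub_nonneg.2 hprod),
    mul_nonneg (add_nonneg (hv.trans hvu) hv) (sub_nonneg.2 hcross)]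

theorem integral_sub_mul_mul_nonpos {h : ℝ → ℝ} (hq : ∀ x, 0 ≤ q x) (hsym : SymmAbout c q)
    (hc : 0 ≤ c) (hanti : ∀ ⦃x y⦄, |x| ≤ |y| → h y ≤ h x) :
    ∫ u, (u - c) * q u * h u ≤ 0 := by
  refine integral_nonpos_of_add_comp_nonpos (Measure.measurePreserving_sub_left volume (2 * c))
    (MeasurableEquiv.subLeft (2 * c)).measurableEmbedding fun u => ?_
  rw [hsym.apply_two_mul_sub]
  rcases le_total c u with hcu | huc
  · have : h u ≤ h (2 * c - u) := hanti <| by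
      rw [abs_of_nonneg (by linarith : 0 ≤ u), abs_le]; constructor <;> linarith
    nlinarith [mul_nonneg (sub_nonneg.2 hcu) (hq u)]
  · have : h (2 * c - u) ≤ h u := hanti <| by
      rw [abs_of_nonneg (by linarith : 0 ≤ 2 * c - u), abs_le]; constructor <;> linarith
    nlinarith [mul_nonneg (sub_nonneg.2 huc) (hq u)]

end Weight

theorem LessPrecise.mul_le_mul {f g : ℝ → ℝ} (hprec : LessPrecise g f) (hpos : ∀ x, 0 < f x)
    (hf : Continuous f) (hg : Continuous g) {u v : ℝ} (hv : 0 ≤ v) (hvu : v ≤ u) :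
    f u * g v ≤ f v * g u := by
  suffices g v / f v ≤ g u / f u by
    rwa [div_le_div_iff₀ (hpos v) (hpos u), mul_comm (g v), mul_comm (g u)] at this
  rcases hvu.eq_or_lt with rfl | hvu
  · rfl
  rcases hv.eq_or_lt with rfl | hv
  · have hratio : Continuous fun x => g x / f x := hg.div hf fun x => (hpos x).ne'
    refine ContinuousWithinAt.closure_le (s := Ioo 0 u) (by simp [closure_Ioo hvu.ne, hvu.le])
      hratio.continuousWithinAt continuousWithinAt_const fun x hx => ?_
    exact hprec hx.1 (hx.1.trans hx.2) hx.2.le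
  · exact hprec hv (hv.trans hvu) hvu.le

theorem IsDensity.continuous {f : ℝ → ℝ} (hf : IsDensity f) : Continuous f :=
  hf.2.1.continuous

theorem IsDensity.integrable {f : ℝ → ℝ} (hf : IsDensity f) : Integrable f := by
  by_contra h
  simpa [integral_undef h] using hf.2.2.1

theorem IsDensity.integrable_id_mul {f : ℝ → ℝ} (hf : IsDensity f) :
    Integrable fun x => x * f x := by
  refine hf.2.2.2.mono' (continuous_id.mul hf.continuous).aestronglyMeasurable
    (ae_of_all _ fun x => ?_)
  rw [norm_mul, norm_eq_abs, norm_of_nonneg (hf.1 x).le]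

theorem IsDensity.comp_neg {f : ℝ → ℝ} (hf : IsDensity f) : IsDensity fun x => f (-x) :=
  ⟨fun x => hf.1 _, hf.2.1.comp contDiff_neg, by rw [integral_neg_eq_self]; exact hf.2.2.1,
    by simpa using hf.2.2.2.comp_neg⟩

theorem IsDensity.norm_le_apply_zero {h : ℝ → ℝ} (hh : IsDensity h) (hsym : SymmAbout 0 h)
    (hqc : QuasiConcaveFn h) (x : ℝ) : ‖h x‖ ≤ h 0 := by
  rw [norm_of_nonneg (hh.1 x).le]
  exact hqc.le_of_abs_sub_le hsym (by simp)

theorem MeasureTheory.Integrable.comp_add_left_mul_bdd {r h : ℝ → ℝ} {C : ℝ} (hr : Integrable r)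
    (hh : Continuous h) (hb : ∀ x, ‖h x‖ ≤ C) (s : ℝ) :
    Integrable fun u => r (s + u) * h u :=
  (hr.comp_add_left s).mul_bdd hh.aestronglyMeasurable (ae_of_all _ hb)

theorem MeasureTheory.Integrable.id_mul_comp_add_left_mul_bdd {r h : ℝ → ℝ} {C : ℝ}
    (hr : Integrable r) (hxr : Integrable fun x => x * r x) (hh : Continuous h)
    (hb : ∀ x, ‖h x‖ ≤ C) (s : ℝ) :
    Integrable fun u => u * r (s + u) * h u := by
  have hmoment : Integrable fun u => u * r (s + u) :=
    ((hxr.comp_add_left s).sub ((hr.comp_add_left s).const_mul s)).congr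
      (ae_of_all _ fun u => by simp only [Pi.sub_apply]; ring)
  exact hmoment.mul_bdd hh.aestronglyMeasurable (ae_of_all _ hb)

theorem postMean_eq_add_div {fX h : ℝ → ℝ} (heven : h.Even) (s : ℝ)
    (hD : Integrable fun u => fX (s + u) * h u) (hM : Integrable fun u => u * fX (s + u) * h u)
    (hD₀ : ∫ u, fX (s + u) * h u ≠ 0) :
    postMean fX h s = s + (∫ u, u * fX (s + u) * h u) / ∫ u, fX (s + u) * h u := by
  have hden : ∫ x, fX x * h (s - x) = ∫ u, fX (s + u) * h u := by
    rw [← integral_add_left_eq_self _ s]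
    simp only [sub_add_cancel_left, heven.eq]
  have hnum : ∫ x, x * fX x * h (s - x)
      = s * (∫ u, fX (s + u) * h u) + ∫ u, u * fX (s + u) * h u := by
    rw [← integral_add_left_eq_self _ s, ← integral_const_mul, ← integral_add (hD.const_mul s) hM]
    simp only [sub_add_cancel_left, heven.eq]
    congr 1 with u
    ring
  rw [postMean, hnum, hden, add_div, mul_div_cancel_right₀ _ hD₀]

theorem postMean_comp_neg {fX h : ℝ → ℝ} (heven : h.Even) (s : ℝ) :
    postMean (fun x => fX (-x)) h (-s) = -postMean fX h s := by
  unfold postMean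
  rw [← integral_neg_eq_self, ← integral_neg_eq_self (fun x => fX (-x) * h (-s - x))]
  simp only [neg_neg, ← neg_sub', heven.eq, neg_mul, integral_neg, neg_div]

theorem integral_mul_integral_le_of_lessPrecise {q f g : ℝ → ℝ} {c : ℝ} (hqpos : ∀ x, 0 < q x)
    (hqlc : LogConcaveFn q) (hqsym : SymmAbout c q) (hc : 0 ≤ c) (hfpos : ∀ x, 0 < f x)
    (hf : Continuous f) (hg : Continuous g) (hfe : f.Even) (hge : g.Even)
    (hprec : LessPrecise g f) (hqf : Integrable fun u => q u * f u)
    (hqg : Integrable fun u => q u * g u) (huqf : Integrable fun u => u * q u * f u)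
    (huqg : Integrable fun u => u * q u * g u) :
    (∫ u, u * q u * f u) * (∫ u, q u * g u) ≤ (∫ u, u * q u * g u) * ∫ u, q u * f u := by
  set A : ℝ → ℝ := fun u => q u + q (-u)
  set B : ℝ → ℝ := fun u => u * q u + -u * q (-u)
  have symmetrize : ∀ {F : ℝ → ℝ} {G : ℝ → ℝ}, Integrable F → (∀ u, G u = F u + F (-u)) →
      Integrable G ∧ ∫ u, G u = 2 * ∫ u, F u := fun hF hG => by
    simp only [funext hG]
    exact ⟨hF.add hF.comp_neg, integral_add_comp_neg hF⟩
  obtain ⟨hAf, hAf'⟩ := symmetrize (G := fun u => A u * f u) hqf fun u => by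
    simp only [A, hfe.eq]; ring
  obtain ⟨hAg, hAg'⟩ := symmetrize (G := fun u => A u * g u) hqg fun u => by
    simp only [A, hge.eq]; ring
  obtain ⟨hBf, hBf'⟩ := symmetrize (G := fun u => B u * f u) huqf fun u => by
    simp only [B, hfe.eq]; ring
  obtain ⟨hBg, hBg'⟩ := symmetrize (G := fun u => B u * g u) huqg fun u => by
    simp only [B, hge.eq]; ring
  have key := integral_mul_integral_le_of_mul_sub_mul_nonpos hBf hAg hBg hAf <|
    mul_sub_mul_mul_nonpos_of_even (fun u => by simp only [B, neg_neg]; ring)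
      (fun u => by simp only [A, neg_neg]; ring) hfe hge fun u v hv hvu =>
        mul_nonpos_of_nonneg_of_nonpos
          (sub_nonneg.2 (hqlc.symmetrized_ratio_le hqpos hqsym hc hv hvu))
          (sub_nonpos.2 (hprec.mul_le_mul hfpos hf hg hv hvu))
  rw [hAf', hAg', hBf', hBg'] at key
  linarith

theorem postMean_le_postMean_and_le_of_le {fX f g : ℝ → ℝ} {μ s : ℝ} (hfX : IsDensity fX)
    (hfXsym : SymmAbout μ fX) (hfXlc : LogConcaveFn fX) (hf : IsDensity f)
    (hfsym : SymmAbout 0 f) (hfqc : QuasiConcaveFn f) (hg : IsDensity g) (hgsym : SymmAbout 0 g)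
    (hgqc : QuasiConcaveFn g) (hprec : LessPrecise g f) (hs : s ≤ μ) :
    postMean fX f s ≤ postMean fX g s ∧ postMean fX g s ≤ μ := by
  set q : ℝ → ℝ := fun u => fX (s + u)
  have hqsym : SymmAbout (μ - s) q := fun x => by
    simp only [q, ← add_assoc, add_sub_cancel, ← add_sub_assoc, hfXsym x]
  have representation : ∀ h : ℝ → ℝ, IsDensity h → SymmAbout 0 h → QuasiConcaveFn h →
      Integrable (fun u => q u * h u) ∧ Integrable (fun u => u * q u * h u) ∧
        0 < ∫ u, q u * h u ∧
        postMean fX h s = s + (∫ u, u * q u * h u) / ∫ u, q u * h u := by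
    intro h hh hsym hqc
    have hD := hfX.integrable.comp_add_left_mul_bdd hh.continuous (hh.norm_le_apply_zero hsym hqc) s
    have hM := hfX.integrable.id_mul_comp_add_left_mul_bdd hfX.integrable_id_mul hh.continuous
      (hh.norm_le_apply_zero hsym hqc) s
    have hD₀ : 0 < ∫ u, q u * h u := integral_pos_of_integrable_nonneg_nonzero (x := 0)
      ((hfX.continuous.comp (continuous_const_add s)).mul hh.continuous) hD
      (fun u => (mul_pos (hfX.1 _) (hh.1 u)).le) (mul_pos (hfX.1 _) (hh.1 0)).ne'
    exact ⟨hD, hM, hD₀, postMean_eq_add_div hsym.even s hD hM hD₀.ne'⟩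
  obtain ⟨hqf, huqf, hDf, hf_eq⟩ := representation f hf hfsym hfqc
  obtain ⟨hqg, huqg, hDg, hg_eq⟩ := representation g hg hgsym hgqc
  rw [hf_eq, hg_eq]
  constructor
  · rw [add_le_add_iff_left, div_le_div_iff₀ hDf hDg]
    exact integral_mul_integral_le_of_lessPrecise (fun u => hfX.1 _) (hfXlc.comp_add_left s)
      hqsym (sub_nonneg.2 hs) hf.1 hf.continuous hg.continuous hfsym.even hgsym.even hprec
      hqf hqg huqf huqg
  · have hsign := integral_sub_mul_mul_nonpos (fun u => (hfX.1 (s + u)).le) hqsym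
      (sub_nonneg.2 hs) fun x y hxy => hgqc.le_of_abs_sub_le hgsym (by simpa using hxy)
    have hsplit : ∫ u, (u - (μ - s)) * q u * g u
        = (∫ u, u * q u * g u) - (μ - s) * ∫ u, q u * g u := by
      rw [← integral_const_mul, ← integral_sub huqg (hqg.const_mul _)]
      congr 1 with u
      ring
    rw [← le_sub_iff_add_le', div_le_iff₀ hDg]
    linarith

theorem imprecision_attenuates_updating_general
    (fX f g : ℝ → ℝ) (μ : ℝ)
    (hfX : IsDensity fX) (hfXsym : SymmAbout μ fX) (hfXlc : LogConcaveFn fX)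
    (hf : IsDensity f) (hfsym : SymmAbout 0 f) (hfqc : QuasiConcaveFn f)
    (hg : IsDensity g) (hgsym : SymmAbout 0 g) (hgqc : QuasiConcaveFn g)
    (hprec : LessPrecise g f) :
    (∀ s ≤ μ, postMean fX f s ≤ postMean fX g s ∧ postMean fX g s ≤ μ) ∧
    (∀ s, μ ≤ s → μ ≤ postMean fX g s ∧ postMean fX g s ≤ postMean fX f s) := by
  refine ⟨fun s hs => postMean_le_postMean_and_le_of_le hfX hfXsym hfXlc hf hfsym hfqc hg hgsym
    hgqc hprec hs, fun s hs => ?_⟩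
  have hreflected := postMean_le_postMean_and_le_of_le hfX.comp_neg hfXsym.comp_neg
    hfXlc.comp_neg hf hfsym hfqc hg hgsym hgqc hprec (neg_le_neg hs)
  rw [postMean_comp_neg hfsym.even, postMean_comp_neg hgsym.even] at hreflected
  constructor <;> linarith [hreflected.1, hreflected.2]

/-- Theorem 1 (sufficiency): imprecision attenuates updating. -/
theorem imprecision_attenuates_updating
    (fX f g : ℝ → ℝ) (μ : ℝ)
    (hfX : IsDensity fX) (hfXsym : SymmAbout μ fX) (hfXlc : LogConcaveFn fX)
    (hμ : μ = ∫ x, x * fX x)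
    (hf : IsDensity f) (hfsym : SymmAbout 0 f) (hfqc : QuasiConcaveFn f)
    (hg : IsDensity g) (hgsym : SymmAbout 0 g) (hgqc : QuasiConcaveFn g)
    (hprec : LessPrecise g f) :
    (∀ s ≤ μ, postMean fX f s ≤ postMean fX g s ∧ postMean fX g s ≤ μ) ∧
    (∀ s, μ ≤ s → μ ≤ postMean fX g s ∧ postMean fX g s ≤ postMean fX f s) :=
  imprecision_attenuates_updating_general fX f g μ hfX hfXsym hfXlc hf hfsym hfqc hg hgsym hgqc
    hprec
end
end

section
/- Necessity of the precision order (Theorem 1, necessity). Let f and g be quasi-concave densities symmetric about 0 such that g is NOT less precise than f, i.e., the ratio x ↦ g(x)/f(x) is not nondecreasing on (0,∞). Then there exist a log-concave density f_X symmetric about 0 (so the prior mean is 0) and a signal realization s > 0 such that E_g[X|S=s] > E_f[X|S=s], where E_h[X|S=s] denotes the posterior mean under prior f_X and noise density h; that is, the attenuation ordering of Theorem 1 is violated. -/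
open MeasureTheory Real Set

noncomputable section

/-!
Take a centred Gaussian prior of variance `σ²`. As `σ → 0`, dominated convergence gives the
small-noise expansion `E_h[X | S = s] = σ² · (-h'(s) / h(s)) + o(σ²)` for any bounded `C¹` noise
density `h` with `h(s) ≠ 0`; a symmetric quasi-concave density is bounded by its value at `0`.
If `g / f` is not nondecreasing on `(0, ∞)`, its derivative is negative at some `s > 0`, which
says `-f'(s) / f(s) < -g'(s) / g(s)`, so a sufficiently tight Gaussian prior separates the two
posterior means the wrong way.
-/

open Filter Topology ProbabilityTheory
open scoped NNReal

lemma SymmAbout.le_apply_zero_of_quasiConcaveFn {h : ℝ → ℝ} (hs : SymmAbout 0 h)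
    (hq : QuasiConcaveFn h) (x : ℝ) : h x ≤ h 0 := by
  have hneg : h (-x) = h x := by simpa using (hs x).symm
  have hmid := hq x (-x) (1 / 2) (by norm_num) (by norm_num)
  rwa [hneg, min_self, show 1 / 2 * x + (1 - 1 / 2) * -x = 0 by ring] at hmid

lemma exists_score_lt_of_not_monotoneOn_div {f g : ℝ → ℝ} (hf : ∀ x, 0 < f x)
    (hg : ∀ x, 0 < g x) (hfd : Differentiable ℝ f) (hgd : Differentiable ℝ g)
    (hmono : ¬ MonotoneOn (fun x => g x / f x) (Ioi 0)) :
    ∃ s, 0 < s ∧ -deriv f s / f s < -deriv g s / g s := by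
  contrapose! hmono
  have hdiv : Differentiable ℝ fun x => g x / f x := hgd.div hfd fun x => (hf x).ne'
  refine monotoneOn_of_deriv_nonneg (convex_Ioi 0) hdiv.continuous.continuousOn
    hdiv.differentiableOn fun x hx => ?_
  rw [interior_Ioi] at hx
  have hscore := hmono x hx
  rw [div_le_div_iff₀ (hg x) (hf x)] at hscore
  rw [deriv_fun_div (hgd x) (hfd x) (hf x).ne']
  exact div_nonneg (by linarith) (sq_nonneg _)

lemma HasDerivAt.exists_abs_sub_le_mul_abs_sub {h : ℝ → ℝ} {h' s C : ℝ}
    (hd : HasDerivAt h h' s) (hb : ∀ x, |h x| ≤ C) : ∃ K, ∀ x, |h x - h s| ≤ K * |x - s| := by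
  obtain ⟨c, hc⟩ := hd.isBigO_sub.bound
  obtain ⟨δ, hδ, hnear⟩ := Metric.eventually_nhds_iff.mp hc
  refine ⟨max c (2 * C / δ), fun x => ?_⟩
  rcases lt_or_ge (dist x s) δ with hx | hx
  · calc |h x - h s| ≤ c * |x - s| := by simpa using hnear hx
      _ ≤ max c (2 * C / δ) * |x - s| := by gcongr; exact le_max_left _ _
  · have hC : 0 ≤ C := (abs_nonneg _).trans (hb 0)
    rw [Real.dist_eq] at hx
    calc |h x - h s| ≤ |h x| + |h s| := abs_sub _ _
      _ ≤ 2 * C / δ * δ := by rw [div_mul_cancel₀ _ hδ.ne']; linarith [hb x, hb s]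
      _ ≤ max c (2 * C / δ) * |x - s| := by gcongr; exact le_max_right _ _

section Scaling

variable {h : ℝ → ℝ} {h' s C : ℝ} {ν : Measure ℝ}

lemma tendsto_integral_comp_sub_mul [IsProbabilityMeasure ν] (hc : Continuous h)
    (hb : ∀ x, |h x| ≤ C) :
    Tendsto (fun σ : ℝ => ∫ u, h (s - σ * u) ∂ν) (𝓝 0) (𝓝 (h s)) := by
  have hlim := tendsto_integral_filter_of_dominated_convergence (μ := ν) (l := 𝓝 (0 : ℝ))
    (F := fun σ u => h (s - σ * u)) (f := fun _ => h s) (fun _ => C)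
    (Eventually.of_forall fun σ =>
      (by fun_prop : Continuous fun u => h (s - σ * u)).aestronglyMeasurable)
    (Eventually.of_forall fun σ => Eventually.of_forall fun u => hb _)
    (integrable_const C)
    (Eventually.of_forall fun u => ?_)
  · simpa using hlim
  · have hcont : Continuous fun σ : ℝ => h (s - σ * u) := by fun_prop
    simpa using hcont.tendsto 0

lemma integral_mul_slope_eq (hc : Continuous h) (hb : ∀ x, |h x| ≤ C)
    (hν₁ : Integrable (fun u => u) ν) (hmean : ∫ u, u ∂ν = 0) (σ : ℝ) :
    ∫ u, u * ((h (s - σ * u) - h s) / σ) ∂ν = (∫ u, u * h (s - σ * u) ∂ν) / σ := by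
  have hint : Integrable (fun u => u * h (s - σ * u)) ν :=
    hν₁.mul_bdd (by fun_prop : Continuous fun u => h (s - σ * u)).aestronglyMeasurable
      (Eventually.of_forall fun u => (Real.norm_eq_abs _).trans_le (hb _))
  simp_rw [mul_div_assoc', mul_sub]
  rw [integral_div, integral_sub hint (hν₁.mul_const _), integral_mul_const, hmean, zero_mul,
    sub_zero]

lemma tendsto_integral_mul_comp_sub_mul_div (hc : Continuous h) (hb : ∀ x, |h x| ≤ C)
    (hd : HasDerivAt h h' s) (hν₁ : Integrable (fun u => u) ν)
    (hν₂ : Integrable (fun u => u ^ 2) ν) (hmean : ∫ u, u ∂ν = 0) :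
    Tendsto (fun σ : ℝ => (∫ u, u * h (s - σ * u) ∂ν) / σ) (𝓝[≠] 0)
      (𝓝 (-h' * ∫ u, u ^ 2 ∂ν)) := by
  obtain ⟨K, hK⟩ := hd.exists_abs_sub_le_mul_abs_sub hb
  have hslope (u : ℝ) :
      Tendsto (fun σ : ℝ => (h (s - σ * u) - h s) / σ) (𝓝[≠] 0) (𝓝 (h' * -u)) := by
    have hcomp : HasDerivAt (fun σ : ℝ => h (s - σ * u)) (h' * -u) 0 := by
      refine HasDerivAt.comp (h := fun σ : ℝ => s - σ * u) 0 (by simpa using hd) ?_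
      simpa using ((hasDerivAt_id (0 : ℝ)).mul_const u).const_sub s
    refine (hasDerivAt_iff_tendsto_slope.mp hcomp).congr fun σ => ?_
    simp [slope_def_field]
  simp_rw [← integral_mul_slope_eq hc hb hν₁ hmean, ← integral_const_mul]
  refine tendsto_integral_filter_of_dominated_convergence (fun u => K * u ^ 2)
    (Eventually.of_forall fun σ => (by fun_prop : Continuous fun u =>
      u * ((h (s - σ * u) - h s) / σ)).aestronglyMeasurable) ?_ (hν₂.const_mul K)
    (Eventually.of_forall fun u => by
      convert (hslope u).const_mul u using 2
      ring)
  filter_upwards [self_mem_nhdsWithin] with σ (hσ : σ ≠ 0)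
  refine Eventually.of_forall fun u => ?_
  calc ‖u * ((h (s - σ * u) - h s) / σ)‖ = |u| * |h (s - σ * u) - h s| / |σ| := by
        rw [Real.norm_eq_abs, abs_mul, abs_div, mul_div_assoc]
    _ ≤ |u| * (K * |σ * u|) / |σ| := by
        gcongr
        simpa using hK (s - σ * u)
    _ = K * u ^ 2 := by
        rw [abs_mul, ← sq_abs u]
        field_simp

end Scaling

section GaussianPrior

variable {μ : ℝ} {v : ℝ≥0}

lemma isDensity_gaussianPDFReal (hv : v ≠ 0) : IsDensity (gaussianPDFReal μ v) := by
  refine ⟨fun x => gaussianPDFReal_pos μ v x hv, ?_, integral_gaussianPDFReal_eq_one μ hv, ?_⟩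
  · rw [gaussianPDFReal_def]
    fun_prop
  · have hmoment := (memLp_id_gaussianReal (μ := μ) (v := v) 1).integrable le_rfl
    rw [gaussianReal_of_var_ne_zero _ hv, integrable_withDensity_iff_integrable_smul'
      (measurable_gaussianPDF _ _) (ae_of_all _ fun _ => gaussianPDF_lt_top)] at hmoment
    refine hmoment.abs.congr (ae_of_all _ fun x => ?_)
    simp [abs_mul, abs_of_nonneg (gaussianPDFReal_nonneg μ v x), mul_comm]

lemma symmAbout_gaussianPDFReal : SymmAbout μ (gaussianPDFReal μ v) := by
  intro x
  simp [gaussianPDFReal]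

lemma logConcaveFn_gaussianPDFReal (hv : v ≠ 0) : LogConcaveFn (gaussianPDFReal μ v) := by
  have hlog : (fun x => Real.log (gaussianPDFReal μ v x))
      = fun x => Real.log (√(2 * π * v))⁻¹ + -((2 * (v : ℝ))⁻¹ • (x - μ) ^ 2) := by
    ext x
    rw [gaussianPDFReal, Real.log_mul (by positivity) (Real.exp_ne_zero _), Real.log_exp,
      smul_eq_mul]
    ring
  have hsq : ConvexOn ℝ univ fun x : ℝ => (x - μ) ^ 2 := by
    simpa [Function.comp_def, neg_add_eq_sub] using
      (Even.convexOn_pow (𝕜 := ℝ) even_two).translate_right (-μ)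
  unfold LogConcaveFn
  rw [hlog]
  exact (concaveOn_const _ convex_univ).add (hsq.smul (by positivity)).neg

lemma postMean_gaussianPDFReal (hv : v ≠ 0) (h : ℝ → ℝ) (s : ℝ) :
    postMean (gaussianPDFReal μ v) h s
      = (∫ x, x * h (s - x) ∂gaussianReal μ v) / ∫ x, h (s - x) ∂gaussianReal μ v := by
  simp only [postMean, integral_gaussianReal_eq_integral_smul hv, smul_eq_mul]
  congr 1
  congr 1 with x
  ring

lemma integral_gaussianReal_sq_eq_integral_comp_mul {F : ℝ → ℝ} (hF : Continuous F) (σ : ℝ≥0) :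
    ∫ x, F x ∂gaussianReal 0 (σ ^ 2) = ∫ u, F (σ * u) ∂gaussianReal 0 1 := by
  have hmap : gaussianReal 0 (σ ^ 2) = (gaussianReal 0 1).map ((σ : ℝ) * ·) := by
    rw [gaussianReal_map_const_mul, mul_zero, mul_one]
    congr
  rw [hmap, integral_map (by fun_prop) hF.aestronglyMeasurable]

lemma integral_sq_gaussianReal_zero_one : ∫ u, u ^ 2 ∂gaussianReal 0 1 = 1 := by
  have hvar := variance_of_integral_eq_zero (X := fun u => u) (μ := gaussianReal 0 1)
    aemeasurable_id' (by simp)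
  simpa using hvar.symm

theorem tendsto_postMean_gaussianPDFReal_div_sq {h : ℝ → ℝ} {h' s C : ℝ} (hc : Continuous h)
    (hb : ∀ x, |h x| ≤ C) (hd : HasDerivAt h h' s) (hs : h s ≠ 0) :
    Tendsto (fun σ : ℝ≥0 => postMean (gaussianPDFReal 0 (σ ^ 2)) h s / σ ^ 2) (𝓝[>] 0)
      (𝓝 (-h' / h s)) := by
  have hcoe : Tendsto (fun σ : ℝ≥0 => (σ : ℝ)) (𝓝[>] 0) (𝓝[≠] 0) :=
    tendsto_nhdsWithin_of_tendsto_nhds_of_eventually_within _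
      (NNReal.continuous_coe.tendsto' 0 0 rfl |>.mono_left nhdsWithin_le_nhds)
      (by filter_upwards [self_mem_nhdsWithin] with σ (hσ : 0 < σ) using by simpa using hσ.ne')
  have hnum := (tendsto_integral_mul_comp_sub_mul_div (ν := gaussianReal 0 1) hc hb hd
    ((memLp_id_gaussianReal 1).integrable le_rfl) (memLp_id_gaussianReal 2).integrable_sq
    integral_id_gaussianReal).comp hcoe
  have hden := (tendsto_integral_comp_sub_mul (ν := gaussianReal 0 1) (s := s) hc hb).comp
    (hcoe.mono_right nhdsWithin_le_nhds)
  rw [integral_sq_gaussianReal_zero_one, mul_one] at hnum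
  refine (hnum.div hden hs).congr' ?_
  filter_upwards [self_mem_nhdsWithin] with σ (hσ : 0 < σ)
  simp only [Pi.div_apply, Function.comp_apply]
  rw [postMean_gaussianPDFReal (pow_ne_zero 2 hσ.ne'),
    integral_gaussianReal_sq_eq_integral_comp_mul (by fun_prop) σ,
    integral_gaussianReal_sq_eq_integral_comp_mul (by fun_prop) σ]
  simp_rw [mul_assoc, integral_const_mul]
  generalize ∫ u, u * h (s - σ * u) ∂gaussianReal 0 1 = N
  field_simp

end GaussianPrior

/-- Theorem 1 (necessity): if `g` is not less precise than `f`, attenuation can fail. -/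
theorem precision_order_necessary
    (f g : ℝ → ℝ)
    (hf : IsDensity f) (hfsym : SymmAbout 0 f) (hfqc : QuasiConcaveFn f)
    (hg : IsDensity g) (hgsym : SymmAbout 0 g) (hgqc : QuasiConcaveFn g)
    (hnot : ¬ LessPrecise g f) :
    ∃ fX : ℝ → ℝ, IsDensity fX ∧ SymmAbout 0 fX ∧ LogConcaveFn fX ∧
      ∃ s : ℝ, 0 < s ∧ postMean fX f s < postMean fX g s := by
  obtain ⟨s, hs, hscore⟩ := exists_score_lt_of_not_monotoneOn_div hf.1 hg.1
    (hf.2.1.differentiable one_ne_zero) (hg.2.1.differentiable one_ne_zero) hnot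
  have hlim (h : ℝ → ℝ) (hh : IsDensity h) (hsym : SymmAbout 0 h) (hqc : QuasiConcaveFn h) :=
    tendsto_postMean_gaussianPDFReal_div_sq hh.2.1.continuous
      (fun x => (abs_of_pos (hh.1 x)).trans_le (hsym.le_apply_zero_of_quasiConcaveFn hqc x))
      ((hh.2.1.differentiable one_ne_zero) s).hasDerivAt (hh.1 s).ne'
  obtain ⟨σ, hlt, hσ⟩ := (((hlim f hf hfsym hfqc).eventually_lt (hlim g hg hgsym hgqc) hscore).and
    self_mem_nhdsWithin).exists
  have hv : σ ^ 2 ≠ 0 := pow_ne_zero 2 (ne_of_gt hσ)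
  refine ⟨gaussianPDFReal 0 (σ ^ 2), isDensity_gaussianPDFReal hv, symmAbout_gaussianPDFReal,
    logConcaveFn_gaussianPDFReal hv, s, hs, ?_⟩
  exact (div_lt_div_iff_of_pos_right (by positivity)).mp hlt
end
end

section
/- Scaling decreases precision (Lemma 1). Let f be a density symmetric about 0 such that the function x ↦ log f(exp x) is concave on ℝ. For σ > 0 define the scaled density f_σ(x) := (1/σ)·f(x/σ). Then for all 0 < σ < σ′, f_{σ′} is less precise than f_σ: the ratio x ↦ f_{σ′}(x)/f_σ(x) is nondecreasing on (0,∞). -/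
open MeasureTheory Real Set

noncomputable section

/-! With `φ t = log f (exp t)`, `t = log x - log σ'` and `d = log σ' - log σ ≥ 0`, the log-ratio
`log f (x / σ') - log f (x / σ)` equals `φ t - φ (t + d)`. Increments of the concave `φ` over a
fixed step are nonincreasing by the three-chord inequality, so the ratio is nondecreasing in `x`. -/

theorem ConcaveOn.antitone_map_add_sub {𝕜 : Type*} [Field 𝕜] [LinearOrder 𝕜]
    [IsStrictOrderedRing 𝕜] {φ : 𝕜 → 𝕜} (hφ : ConcaveOn 𝕜 univ φ) {d : 𝕜} (hd : 0 ≤ d) :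
    Antitone fun t => φ (t + d) - φ t := by
  intro t u htu
  rcases hd.eq_or_lt with rfl | hd
  · simp
  have hslope : slope φ u (u + d) ≤ slope φ t (t + d) := calc
    slope φ u (u + d) = slope φ (u + d) u := slope_comm ..
    _ ≤ slope φ (u + d) t := hφ.slope_anti (mem_univ _)
      ⟨mem_univ t, (by linarith : t < u + d).ne⟩ ⟨mem_univ u, (by linarith : u < u + d).ne⟩ htu
    _ = slope φ t (u + d) := slope_comm ..
    _ ≤ slope φ t (t + d) := hφ.slope_anti (mem_univ _)
      ⟨mem_univ _, (by linarith : t < t + d).ne'⟩ ⟨mem_univ _, (by linarith : t < u + d).ne'⟩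
      (by linarith)
  simpa [slope_def_field, div_le_div_iff_of_pos_right hd] using hslope

theorem monotoneOn_div_comp_div_of_concaveOn_log_comp_exp {g : ℝ → ℝ}
    (hpos : ∀ x, 0 < x → 0 < g x) (hconc : ConcaveOn ℝ univ fun t => log (g (exp t)))
    {a b : ℝ} (ha : 0 < a) (hab : a ≤ b) :
    MonotoneOn (fun x => g (x / b) / g (x / a)) (Ioi 0) := by
  set φ := fun t => log (g (exp t))
  have hb : 0 < b := ha.trans_le hab
  have hlog_ratio : ∀ x, 0 < x → log (g (x / b) / g (x / a)) =
      -(φ (log x - log b + (log b - log a)) - φ (log x - log b)) := by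
    intro x hx
    simp only [φ, sub_add_sub_cancel, exp_sub, exp_log hx, exp_log ha, exp_log hb]
    rw [log_div (hpos _ (by positivity)).ne' (hpos _ (by positivity)).ne']
    ring
  intro x hx y hy hxy
  rw [← log_le_log_iff (div_pos (hpos _ (div_pos hx hb)) (hpos _ (div_pos hx ha)))
    (div_pos (hpos _ (div_pos hy hb)) (hpos _ (div_pos hy ha))), hlog_ratio x hx, hlog_ratio y hy]
  exact neg_le_neg <| hconc.antitone_map_add_sub (sub_nonneg.2 (log_le_log ha hab))
    (sub_le_sub_right (log_le_log hx hxy) _)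

theorem scaling_decreases_precision_general
    (f : ℝ → ℝ) (hf : IsDensity f)
    (hconc : ConcaveOn ℝ Set.univ fun x => Real.log (f (Real.exp x)))
    (σ σ' : ℝ) (hσ : 0 < σ) (hσ' : σ < σ') :
    LessPrecise (fun x => (1 / σ') * f (x / σ')) (fun x => (1 / σ) * f (x / σ)) := by
  have hratio : (fun x => (1 / σ') * f (x / σ') / ((1 / σ) * f (x / σ))) =
      fun x => σ / σ' * (f (x / σ') / f (x / σ)) := by
    funext x
    field_simp [(hf.1 (x / σ)).ne']
  have hmono :=
    monotoneOn_div_comp_div_of_concaveOn_log_comp_exp (fun x _ => hf.1 x) hconc hσ hσ'.le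
  unfold LessPrecise
  rw [hratio]
  exact fun x hx y hy hxy => mul_le_mul_of_nonneg_left (hmono hx hy hxy)
    (div_nonneg hσ.le (hσ.trans hσ').le)

/-- Lemma 1: scaling up a noise density whose log-exp reparametrization is concave
yields a less precise density. -/
theorem scaling_decreases_precision
    (f : ℝ → ℝ) (hf : IsDensity f) (hsym : SymmAbout 0 f)
    (hconc : ConcaveOn ℝ Set.univ fun x => Real.log (f (Real.exp x)))
    (σ σ' : ℝ) (hσ : 0 < σ) (hσ' : σ < σ') :
    LessPrecise (fun x => (1 / σ') * f (x / σ')) (fun x => (1 / σ) * f (x / σ)) :=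
  scaling_decreases_precision_general f hf hconc σ σ' hσ hσ'
end
end

section
/- Comparative statics in the scale parameter (Corollary 1). Let f_X be a log-concave density symmetric about its mean μ, and let f_ε be a log-concave density symmetric about 0. For σ > 0, let E_σ[X|S=s] denote the posterior mean under prior f_X and noise density x ↦ (1/σ)·f_ε(x/σ). Then for all σ̃ > σ > 0: for every s ≤ μ, E_σ[X|S=s] ≤ E_σ̃[X|S=s] ≤ μ, and for every s ≥ μ, E_σ[X|S=s] ≥ E_σ̃[X|S=s] ≥ μ. -/
open MeasureTheory Real Set

noncomputable section

/-!
Write `a_τ(x) = f_X(x) f_τ(s - x)`, with `f_τ = rescale f_ε τ`, for the unnormalised posterior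
under the noise of scale `τ`. Then `E_σ[X|s] ≤ E_σ'[X|s]` says `∫∫ (x - y) a_σ(x) a_σ'(y) ≤ 0`.
Averaging the integrand over the eight symmetries of the square centred at `(s, s)` turns it into
`k(x, y) · Γ(x, y)`, where `k(x, y) = f_σ(s - x) f_σ'(s - y) - f_σ(s - y) f_σ'(s - x)` only
involves the noise and `Γ = reflectedMoment f_X s` only involves the prior. Both are antisymmetric,
and when `|s - x| ≤ |s - y|` we have `k ≥ 0`, because the likelihood ratio `f_σ' / f_σ` of a
log-concave symmetric noise grows with `|u|`, and `Γ ≤ 0`, because for `s ≤ μ` the prior puts more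
weight on `s + u` than on `s - u`. So `k Γ ≤ 0` everywhere. The bound `E[X|s] ≤ μ` comes from the
same averaging under `x ↦ 2μ - x`, and the case `s ≥ μ` is the mirror image of `2μ - s`, since
`E[X | 2μ - s] = 2μ - E[X | s]`.
-/

namespace SymmAbout

variable {m : ℝ} {f : ℝ → ℝ}

lemma apply_two_mul_sub_s4 (h : SymmAbout m f) (x : ℝ) : f (2 * m - x) = f x := by
  simpa [two_mul, add_sub_assoc] using h (m - x)

lemma apply_neg (h : SymmAbout 0 f) (x : ℝ) : f (-x) = f x := by
  simpa using h.apply_two_mul_sub_s4 x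

end SymmAbout

lemma ConcaveOn.add_le_add_of_add_eq {ψ : ℝ → ℝ} (hψ : ConcaveOn ℝ univ ψ) {a b c d : ℝ}
    (hab : a ≤ b) (hac : a ≤ c) (hsum : b + c = a + d) : ψ a + ψ d ≤ ψ b + ψ c := by
  rcases (show a ≤ d by linarith).eq_or_lt with rfl | had
  · obtain rfl : b = a := by linarith
    obtain rfl : c = b := by linarith
    rfl
  have hda : 0 < d - a := by linarith
  set p := (d - b) / (d - a) with hp_def
  set q := (b - a) / (d - a) with hq_def
  have hp : 0 ≤ p := div_nonneg (by linarith) hda.le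
  have hq : 0 ≤ q := div_nonneg (by linarith) hda.le
  have hpq : p + q = 1 := by rw [hp_def, hq_def]; field_simp; ring
  have hb : p * a + q * d = b := by rw [hp_def, hq_def]; field_simp; ring
  have hc : q * a + p * d = c := by
    rw [hp_def, hq_def, show c = a + d - b by linarith]; field_simp; ring
  have h₁ := hψ.2 (mem_univ a) (mem_univ d) hp hq hpq
  have h₂ := hψ.2 (mem_univ a) (mem_univ d) hq hp (by linarith)
  simp only [smul_eq_mul, hb, hc] at h₁ h₂
  have h : (p + q) * (ψ a + ψ d) ≤ ψ b + ψ c := by linarith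
  rwa [hpq, one_mul] at h

namespace LogConcaveFn

variable {f : ℝ → ℝ}

lemma mul_le_mul_of_add_eq (hf : LogConcaveFn f) (hpos : ∀ x, 0 < f x) {a b c d : ℝ}
    (hab : a ≤ b) (hac : a ≤ c) (hsum : b + c = a + d) : f a * f d ≤ f b * f c := by
  rw [← Real.log_le_log_iff (mul_pos (hpos a) (hpos d)) (mul_pos (hpos b) (hpos c)),
    Real.log_mul (hpos a).ne' (hpos d).ne', Real.log_mul (hpos b).ne' (hpos c).ne']
  exact ConcaveOn.add_le_add_of_add_eq hf hab hac hsum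

lemma le_of_abs_sub_le (hf : LogConcaveFn f) (hpos : ∀ x, 0 < f x) {m : ℝ}
    (hsym : SymmAbout m f) {a b : ℝ} (hab : |a - m| ≤ |b - m|) : f b ≤ f a := by
  set r := |b - m|
  have hr : f (m + r) = f b := by
    rcases abs_cases (b - m) with ⟨h, -⟩ | ⟨h, -⟩
    · congr 1; linarith
    · rw [hsym]; congr 1; linarith
  have ha : a ∈ segment ℝ (m - r) (m + r) := by
    rw [segment_eq_Icc (by linarith [abs_nonneg (b - m)])]
    constructor <;> linarith [abs_le.1 hab]
  have h := hf.min_le_of_mem_segment (mem_univ (m - r)) (mem_univ (m + r)) ha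
  rw [← hsym, min_self, hr] at h
  exact (Real.log_le_log_iff (hpos b) (hpos a)).1 h

end LogConcaveFn

def rescale (f : ℝ → ℝ) (τ : ℝ) (x : ℝ) : ℝ := 1 / τ * f (x / τ)

section Rescale

variable {f : ℝ → ℝ}

lemma SymmAbout.rescale (hsym : SymmAbout 0 f) (τ : ℝ) : SymmAbout 0 (rescale f τ) := by
  intro x
  simp only [_root_.rescale, zero_add, zero_sub, neg_div, hsym.apply_neg]

lemma LogConcaveFn.rescale_le_of_abs_le (hf : LogConcaveFn f) (hpos : ∀ x, 0 < f x)
    (hsym : SymmAbout 0 f) {τ : ℝ} (hτ : 0 < τ) {u v : ℝ} (huv : |u| ≤ |v|) :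
    rescale f τ v ≤ rescale f τ u := by
  have h : |u / τ - 0| ≤ |v / τ - 0| := by
    simp only [sub_zero, abs_div, abs_of_pos hτ]
    gcongr
  exact mul_le_mul_of_nonneg_left (hf.le_of_abs_sub_le hpos hsym h) (by positivity)

lemma LogConcaveFn.mul_le_mul_of_scale_le (hf : LogConcaveFn f) (hpos : ∀ x, 0 < f x)
    (hsym : SymmAbout 0 f) {σ σ' : ℝ} (hσ : 0 < σ) (hσσ' : σ ≤ σ') {u v : ℝ} (hu : 0 ≤ u)
    (huv : u ≤ v) : f (v / σ) * f (u / σ') ≤ f (u / σ) * f (v / σ') := by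
  have hσ' : 0 < σ' := hσ.trans_le hσσ'
  -- `u / σ + (v - u) / σ'` completes `u / σ' ≤ u / σ, v / σ'` to a pair with equal sums,
  -- and lies in `[0, v / σ]`
  have hpair := hf.mul_le_mul_of_add_eq hpos (a := u / σ') (b := u / σ) (c := v / σ')
    (d := u / σ + (v - u) / σ') (by gcongr) (by gcongr) (by ring)
  have hdecay : f (v / σ) ≤ f (u / σ + (v - u) / σ') := by
    refine hf.le_of_abs_sub_le hpos hsym ?_
    have h₁ : 0 ≤ u / σ + (v - u) / σ' := by have := sub_nonneg.2 huv; positivity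
    have h₂ : (v - u) / σ' ≤ (v - u) / σ := div_le_div_of_nonneg_left (by linarith) hσ hσσ'
    rw [sub_zero, sub_zero, abs_of_nonneg h₁, abs_of_nonneg (div_nonneg (hu.trans huv) hσ.le)]
    calc u / σ + (v - u) / σ' ≤ u / σ + (v - u) / σ := by linarith
      _ = v / σ := by ring
  calc f (v / σ) * f (u / σ') ≤ f (u / σ + (v - u) / σ') * f (u / σ') :=
        mul_le_mul_of_nonneg_right hdecay (hpos _).le
    _ ≤ f (u / σ) * f (v / σ') := by linarith

lemma LogConcaveFn.rescale_mul_rescale_le (hf : LogConcaveFn f) (hpos : ∀ x, 0 < f x)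
    (hsym : SymmAbout 0 f) {σ σ' : ℝ} (hσ : 0 < σ) (hσσ' : σ ≤ σ') {u v : ℝ}
    (huv : |u| ≤ |v|) : rescale f σ v * rescale f σ' u ≤ rescale f σ u * rescale f σ' v := by
  have habs : ∀ x τ, f (x / τ) = f (|x| / τ) := fun x τ => by
    rcases abs_cases x with ⟨h, -⟩ | ⟨h, -⟩ <;> simp only [h, neg_div, hsym.apply_neg]
  have h := hf.mul_le_mul_of_scale_le hpos hsym hσ hσσ' (abs_nonneg u) huv
  simp only [rescale, habs u, habs v]
  have hσ' : 0 < σ' := hσ.trans_le hσσ'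
  calc 1 / σ * f (|v| / σ) * (1 / σ' * f (|u| / σ'))
      = 1 / σ * (1 / σ') * (f (|v| / σ) * f (|u| / σ')) := by ring
    _ ≤ 1 / σ * (1 / σ') * (f (|u| / σ) * f (|v| / σ')) := by gcongr
    _ = 1 / σ * f (|u| / σ) * (1 / σ' * f (|v| / σ')) := by ring

end Rescale

def reflectedMoment (f : ℝ → ℝ) (s x y : ℝ) : ℝ :=
  (x - y) * f x * f y + (2 * s - x - y) * f (2 * s - x) * f y +
    (x - (2 * s - y)) * f x * f (2 * s - y) + (y - x) * f (2 * s - x) * f (2 * s - y)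

section ReflectedMoment

variable {f : ℝ → ℝ} {s : ℝ}

lemma reflectedMoment_swap (x y : ℝ) : reflectedMoment f s y x = -reflectedMoment f s x y := by
  unfold reflectedMoment; ring

lemma reflectedMoment_reflect_left (x y : ℝ) :
    reflectedMoment f s (2 * s - x) y = reflectedMoment f s x y := by
  unfold reflectedMoment; rw [sub_sub_cancel]; ring

lemma reflectedMoment_reflect_right (x y : ℝ) :
    reflectedMoment f s x (2 * s - y) = reflectedMoment f s x y := by
  rw [← neg_neg (reflectedMoment f s x _), ← reflectedMoment_swap, reflectedMoment_reflect_left,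
    reflectedMoment_swap, neg_neg]

variable {μ : ℝ}

lemma LogConcaveFn.reflectedMoment_sub_sub_nonpos (hf : LogConcaveFn f) (hpos : ∀ x, 0 < f x)
    (hsym : SymmAbout μ f) (hs : s ≤ μ) {u v : ℝ} (hu : 0 ≤ u) (huv : u ≤ v) :
    reflectedMoment f s (s - u) (s - v) ≤ 0 := by
  have hcloser : ∀ t, 0 ≤ t → f (s - t) ≤ f (s + t) := fun t ht => by
    refine hf.le_of_abs_sub_le hpos hsym ?_
    rw [abs_sub_comm (s - t)]
    exact abs_le_abs (by linarith) (by linarith)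
  have hcross : f (s - v) * f (s + u) ≤ f (s - u) * f (s + v) := by
    have h := hf.mul_le_mul_of_add_eq hpos (a := s + u) (b := s + v) (c := 2 * μ - (s - u))
      (d := 2 * μ - (s - v)) (by linarith) (by linarith) (by ring)
    rw [hsym.apply_two_mul_sub_s4, hsym.apply_two_mul_sub_s4] at h
    linarith
  have hrefl : ∀ t, 2 * s - (s - t) = s + t := fun t => by ring
  have hα := hcloser u hu
  have hβ := hcloser v (hu.trans huv)
  simp only [reflectedMoment, hrefl]
  set α := f (s - u)
  set β := f (s - v)
  set γ := f (s + u)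
  set δ := f (s + v)
  calc _ = u * ((γ - α) * (β + δ)) - v * ((α + γ) * (δ - β)) := by ring
    _ ≤ v * ((γ - α) * (β + δ)) - v * ((α + γ) * (δ - β)) := by
        gcongr
        exact mul_nonneg (sub_nonneg.2 hα) (add_pos (hpos _) (hpos _)).le
    _ = 2 * v * (β * γ - α * δ) := by ring
    _ ≤ 0 := mul_nonpos_of_nonneg_of_nonpos (by linarith) (by linarith)

lemma LogConcaveFn.reflectedMoment_nonpos (hf : LogConcaveFn f) (hpos : ∀ x, 0 < f x)
    (hsym : SymmAbout μ f) (hs : s ≤ μ) {x y : ℝ} (hxy : |s - x| ≤ |s - y|) :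
    reflectedMoment f s x y ≤ 0 := by
  have hfold : ∀ t, s - |s - t| = t ∨ s - |s - t| = 2 * s - t := fun t => by
    rcases abs_cases (s - t) with ⟨h, -⟩ | ⟨h, -⟩
    · left; rw [h]; ring
    · right; rw [h]; ring
  have h := hf.reflectedMoment_sub_sub_nonpos hpos hsym hs (abs_nonneg _) hxy
  rcases hfold x with hx | hx <;> rcases hfold y with hy | hy <;>
    simpa only [hx, hy, reflectedMoment_reflect_left, reflectedMoment_reflect_right] using h

end ReflectedMoment

lemma LogConcaveFn.cross_mul_reflectedMoment_nonpos {f g g' : ℝ → ℝ} {μ s : ℝ}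
    (hf : LogConcaveFn f) (hpos : ∀ x, 0 < f x) (hsym : SymmAbout μ f) (hs : s ≤ μ)
    (hcross : ∀ u v, |u| ≤ |v| → g v * g' u ≤ g u * g' v) (x y : ℝ) :
    (g (s - x) * g' (s - y) - g (s - y) * g' (s - x)) * reflectedMoment f s x y ≤ 0 := by
  rcases le_total |s - x| |s - y| with h | h
  · exact mul_nonpos_of_nonneg_of_nonpos (sub_nonneg.2 (hcross _ _ h))
      (hf.reflectedMoment_nonpos hpos hsym hs h)
  · rw [← neg_neg (reflectedMoment f s x y), ← reflectedMoment_swap]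
    exact mul_nonpos_of_nonpos_of_nonneg (sub_nonpos.2 (hcross _ _ h))
      (neg_nonneg.2 (hf.reflectedMoment_nonpos hpos hsym hs h))

namespace MeasureTheory.MeasurePreserving

variable {α : Type*} [MeasurableSpace α] {μ : Measure α} {T : α ≃ᵐ α} {H : α → ℝ}

lemma integrable_add_comp (hT : MeasurePreserving T μ μ) (hH : Integrable H μ) :
    Integrable (fun x => H x + H (T x)) μ :=
  hH.add (hT.integrable_comp_of_integrable hH)

lemma integral_add_comp (hT : MeasurePreserving T μ μ) (hH : Integrable H μ) :
    ∫ x, (H x + H (T x)) ∂μ = 2 * ∫ x, H x ∂μ := by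
  have hHT : Integrable (fun x => H (T x)) μ := hT.integrable_comp_of_integrable hH
  rw [integral_add hH hHT, hT.integral_comp' H, two_mul]

end MeasureTheory.MeasurePreserving

lemma integral_pos_of_forall_pos {F : ℝ → ℝ} (hF : Integrable F) (hpos : ∀ x, 0 < F x) :
    0 < ∫ x, F x := by
  rw [integral_pos_iff_support_of_nonneg (fun x => (hpos x).le) hF,
    Function.support_eq_univ fun x => (hpos x).ne']
  simp

def dihedralSum (c : ℝ) (H : ℝ × ℝ → ℝ) (x y : ℝ) : ℝ :=
  H (x, y) + H (y, x) + (H (2 * c - x, y) + H (y, 2 * c - x)) +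
    (H (x, 2 * c - y) + H (2 * c - y, x) + (H (2 * c - x, 2 * c - y) + H (2 * c - y, 2 * c - x)))

lemma integral_dihedralSum (c : ℝ) {H : ℝ × ℝ → ℝ} (hH : Integrable H) :
    ∫ z : ℝ × ℝ, dihedralSum c H z.1 z.2 = 8 * ∫ z, H z := by
  set swap : ℝ × ℝ ≃ᵐ ℝ × ℝ := MeasurableEquiv.prodComm
  set R₁ := (MeasurableEquiv.subLeft (2 * c)).prodCongr (MeasurableEquiv.refl ℝ)
  set R₂ := (MeasurableEquiv.refl ℝ).prodCongr (MeasurableEquiv.subLeft (2 * c))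
  have hswap : MeasurePreserving swap volume volume := Measure.measurePreserving_swap
  have hR₁ : MeasurePreserving R₁ volume volume :=
    (volume.measurePreserving_sub_left _).prod (MeasurePreserving.id volume)
  have hR₂ : MeasurePreserving R₂ volume volume :=
    (MeasurePreserving.id volume).prod (volume.measurePreserving_sub_left _)
  set H₁ := fun z => H z + H (swap z)
  set H₂ := fun z => H₁ z + H₁ (R₁ z)
  have hH₁ : Integrable H₁ := hswap.integrable_add_comp hH
  calc ∫ z : ℝ × ℝ, dihedralSum c H z.1 z.2 = ∫ z, (H₂ z + H₂ (R₂ z)) := rfl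
    _ = 8 * ∫ z, H z := by
      rw [hR₂.integral_add_comp (hR₁.integrable_add_comp hH₁), hR₁.integral_add_comp hH₁,
        hswap.integral_add_comp hH]
      ring

section ProductMoment

variable {a b : ℝ → ℝ}

lemma integrable_sub_mul_mul (ha : Integrable a) (hxa : Integrable fun x => x * a x)
    (hb : Integrable b) (hxb : Integrable fun x => x * b x) :
    Integrable fun z : ℝ × ℝ => (z.1 - z.2) * a z.1 * b z.2 :=
  ((hxa.mul_prod hb).sub (ha.mul_prod hxb)).congr (ae_of_all _ fun z => by
    simp only [Pi.sub_apply]; ring)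

lemma integral_sub_mul_mul (ha : Integrable a) (hxa : Integrable fun x => x * a x)
    (hb : Integrable b) (hxb : Integrable fun x => x * b x) :
    ∫ z : ℝ × ℝ, (z.1 - z.2) * a z.1 * b z.2 =
      (∫ x, x * a x) * (∫ x, b x) - (∫ x, a x) * (∫ x, x * b x) := by
  have e : ∀ z : ℝ × ℝ,
      (z.1 - z.2) * a z.1 * b z.2 = z.1 * a z.1 * b z.2 - a z.1 * (z.2 * b z.2) := fun z => by ring
  simp only [e]
  rw [Measure.volume_eq_prod, integral_sub (hxa.mul_prod hb) (ha.mul_prod hxb),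
    integral_prod_mul (fun x => x * a x) b, integral_prod_mul a (fun x => x * b x)]

end ProductMoment

lemma integral_mul_integral_le_of_cross {f g g' : ℝ → ℝ} {s : ℝ} (hg : SymmAbout 0 g)
    (hg' : SymmAbout 0 g') (hA : Integrable fun x => f x * g (s - x))
    (hB : Integrable fun x => x * f x * g (s - x)) (hA' : Integrable fun x => f x * g' (s - x))
    (hB' : Integrable fun x => x * f x * g' (s - x))
    (hpt : ∀ x y,
      (g (s - x) * g' (s - y) - g (s - y) * g' (s - x)) * reflectedMoment f s x y ≤ 0) :
    (∫ x, x * f x * g (s - x)) * (∫ x, f x * g' (s - x)) ≤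
      (∫ x, x * f x * g' (s - x)) * (∫ x, f x * g (s - x)) := by
  simp only [mul_assoc] at hB hB' ⊢
  set H : ℝ × ℝ → ℝ := fun z => (z.1 - z.2) * (f z.1 * g (s - z.1)) * (f z.2 * g' (s - z.2))
  have h8 := integral_dihedralSum s (integrable_sub_mul_mul hA hB hA' hB' : Integrable H)
  rw [integral_sub_mul_mul hA hB hA' hB'] at h8
  have hreflect : ∀ (k : ℝ → ℝ), SymmAbout 0 k → ∀ t, k (s - (2 * s - t)) = k (s - t) :=
    fun k hk t => by rw [show s - (2 * s - t) = -(s - t) by ring, hk.apply_neg]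
  have hsum : ∀ x y, dihedralSum s H x y =
      (g (s - x) * g' (s - y) - g (s - y) * g' (s - x)) * reflectedMoment f s x y := by
    intro x y
    simp only [dihedralSum, H, hreflect g hg, hreflect g' hg', reflectedMoment]
    ring
  have hneg : ∫ z : ℝ × ℝ, dihedralSum s H z.1 z.2 ≤ 0 :=
    integral_nonpos fun z => (hsum z.1 z.2).trans_le (hpt _ _)
  linarith

lemma LogConcaveFn.postMean_le_postMean {f g g' : ℝ → ℝ} {μ s : ℝ} (hf : LogConcaveFn f)
    (hfpos : ∀ x, 0 < f x) (hfsym : SymmAbout μ f) (hs : s ≤ μ) (hg : SymmAbout 0 g)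
    (hg' : SymmAbout 0 g') (hcross : ∀ u v, |u| ≤ |v| → g v * g' u ≤ g u * g' v)
    (hA : Integrable fun x => f x * g (s - x)) (hB : Integrable fun x => x * f x * g (s - x))
    (hA' : Integrable fun x => f x * g' (s - x)) (hB' : Integrable fun x => x * f x * g' (s - x))
    (hpos : 0 < ∫ x, f x * g (s - x)) (hpos' : 0 < ∫ x, f x * g' (s - x)) :
    postMean f g s ≤ postMean f g' s := by
  rw [postMean, postMean, div_le_div_iff₀ hpos hpos']
  exact integral_mul_integral_le_of_cross hg hg' hA hB hA' hB'
    (hf.cross_mul_reflectedMoment_nonpos hfpos hfsym hs hcross)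

lemma postMean_le_of_le {f g : ℝ → ℝ} {μ s : ℝ} (hf : SymmAbout μ f) (hf0 : ∀ x, 0 ≤ f x)
    (hg : ∀ u v, |u| ≤ |v| → g v ≤ g u) (hA : Integrable fun x => f x * g (s - x))
    (hB : Integrable fun x => x * f x * g (s - x)) (hpos : 0 < ∫ x, f x * g (s - x))
    (hs : s ≤ μ) : postMean f g s ≤ μ := by
  set H : ℝ → ℝ := fun x => (x - μ) * f x * g (s - x)
  have hH_eq : ∀ x, H x = x * f x * g (s - x) - μ * (f x * g (s - x)) := fun x => by ring
  have hH : Integrable H :=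
    (hB.sub (hA.const_mul μ)).congr (ae_of_all _ fun x => (hH_eq x).symm)
  have hint : ∫ x, H x = (∫ x, x * f x * g (s - x)) - μ * ∫ x, f x * g (s - x) := by
    simp only [hH_eq]
    rw [integral_sub hB (hA.const_mul μ), integral_const_mul]
  set T : ℝ ≃ᵐ ℝ := MeasurableEquiv.subLeft (2 * μ)
  have hT : MeasurePreserving T volume volume := volume.measurePreserving_sub_left _
  have hpt : ∀ x, H x + H (T x) ≤ 0 := by
    intro x
    change H x + H (2 * μ - x) ≤ 0
    have hsplit : H x + H (2 * μ - x) = (x - μ) * f x * (g (s - x) - g (s - (2 * μ - x))) := by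
      simp only [H, hf.apply_two_mul_sub_s4]; ring
    rw [hsplit]
    rcases le_total x μ with hx | hx
    · refine mul_nonpos_of_nonpos_of_nonneg ?_ (sub_nonneg.2 (hg _ _ ?_))
      · exact mul_nonpos_of_nonpos_of_nonneg (by linarith) (hf0 x)
      · rw [abs_sub_comm s (2 * μ - x)]; exact abs_le_abs (by linarith) (by linarith)
    · refine mul_nonpos_of_nonneg_of_nonpos ?_ (sub_nonpos.2 (hg _ _ ?_))
      · exact mul_nonneg (by linarith) (hf0 x)
      · rw [abs_sub_comm s x]; exact abs_le_abs (by linarith) (by linarith)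
  have h2 := hT.integral_add_comp hH
  have hneg : ∫ x, (H x + H (T x)) ≤ 0 := integral_nonpos hpt
  rw [postMean, div_le_iff₀ hpos]
  linarith

lemma postMean_two_mul_sub {f g : ℝ → ℝ} {μ s : ℝ} (hf : SymmAbout μ f) (hg : SymmAbout 0 g)
    (hA : Integrable fun x => f x * g (s - x)) (hB : Integrable fun x => x * f x * g (s - x))
    (hpos : 0 < ∫ x, f x * g (s - x)) :
    postMean f g (2 * μ - s) = 2 * μ - postMean f g s := by
  have hreflect : ∀ x, g (2 * μ - s - (2 * μ - x)) = g (s - x) := fun x => by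
    rw [show 2 * μ - s - (2 * μ - x) = -(s - x) by ring, hg.apply_neg]
  have hmass : ∫ x, f x * g (2 * μ - s - x) = ∫ x, f x * g (s - x) := by
    rw [← integral_sub_left_eq_self _ volume (2 * μ)]
    simp only [hf.apply_two_mul_sub_s4, hreflect]
  have hmoment : ∫ x, x * f x * g (2 * μ - s - x) =
      2 * μ * (∫ x, f x * g (s - x)) - ∫ x, x * f x * g (s - x) := by
    rw [← integral_sub_left_eq_self _ volume (2 * μ), ← integral_const_mul,
      ← integral_sub (hA.const_mul _) hB]
    congr 1 with x
    rw [hf.apply_two_mul_sub_s4, hreflect]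
    ring
  rw [postMean, postMean, hmass, hmoment]
  field_simp

namespace IsDensity

variable {f : ℝ → ℝ}

lemma integrable_s4 (hf : IsDensity f) : Integrable f := by
  by_contra h
  have h₁ := hf.2.2.1
  rw [integral_undef h] at h₁
  exact zero_ne_one h₁

lemma integrable_id_mul_s4 (hf : IsDensity f) : Integrable fun x => x * f x :=
  hf.2.2.2.mono' (continuous_id.aestronglyMeasurable.mul hf.integrable_s4.aestronglyMeasurable)
    (ae_of_all _ fun x => by rw [norm_mul, Real.norm_eq_abs, Real.norm_of_nonneg (hf.1 x).le])

lemma integrable_mul_rescale (hf : IsDensity f) (hlc : LogConcaveFn f) (hsym : SymmAbout 0 f)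
    {h : ℝ → ℝ} (hh : Integrable h) (τ s : ℝ) :
    Integrable fun x => h x * rescale f τ (s - x) := by
  have hcont : Continuous (rescale f τ) :=
    continuous_const.mul (hf.2.1.continuous.comp (continuous_id.div_const τ))
  refine hh.mul_bdd (c := |1 / τ| * f 0)
    (hcont.comp (continuous_const.sub continuous_id)).aestronglyMeasurable (ae_of_all _ fun x => ?_)
  have hmax : f ((s - x) / τ) ≤ f 0 := hlc.le_of_abs_sub_le hf.1 hsym (by simp)
  rw [rescale, norm_mul, Real.norm_eq_abs, Real.norm_of_nonneg (hf.1 _).le]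
  gcongr

end IsDensity

section RescaledNoise

variable {fX fε : ℝ → ℝ} {μ τ s : ℝ}

lemma IsDensity.integral_mul_rescale_pos (hfX : IsDensity fX) (hfε : IsDensity fε)
    (hlc : LogConcaveFn fε) (hsym : SymmAbout 0 fε) (hτ : 0 < τ) (s : ℝ) :
    0 < ∫ x, fX x * rescale fε τ (s - x) :=
  integral_pos_of_forall_pos (hfε.integrable_mul_rescale hlc hsym hfX.integrable_s4 τ s)
    fun x => mul_pos (hfX.1 x) (mul_pos (one_div_pos.2 hτ) (hfε.1 _))

lemma postMean_rescale_le_rescale_le {σ σ' : ℝ} (hfX : IsDensity fX) (hfXsym : SymmAbout μ fX)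
    (hfXlc : LogConcaveFn fX) (hfε : IsDensity fε) (hfεsym : SymmAbout 0 fε)
    (hfεlc : LogConcaveFn fε) (hσ : 0 < σ) (hσσ' : σ ≤ σ') (hs : s ≤ μ) :
    postMean fX (rescale fε σ) s ≤ postMean fX (rescale fε σ') s ∧
      postMean fX (rescale fε σ') s ≤ μ := by
  have hσ' := hσ.trans_le hσσ'
  have hA := fun τ => hfε.integrable_mul_rescale hfεlc hfεsym hfX.integrable_s4 τ s
  have hB := fun τ => hfε.integrable_mul_rescale hfεlc hfεsym hfX.integrable_id_mul_s4 τ s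
  have hpos := fun τ (hτ : 0 < τ) => hfX.integral_mul_rescale_pos hfε hfεlc hfεsym hτ s
  refine ⟨hfXlc.postMean_le_postMean hfX.1 hfXsym hs (hfεsym.rescale σ) (hfεsym.rescale σ')
    (fun u v huv => hfεlc.rescale_mul_rescale_le hfε.1 hfεsym hσ hσσ' huv)
    (hA σ) (hB σ) (hA σ') (hB σ') (hpos σ hσ) (hpos σ' hσ'), ?_⟩
  exact postMean_le_of_le hfXsym (fun x => (hfX.1 x).le)
    (fun u v huv => hfεlc.rescale_le_of_abs_le hfε.1 hfεsym hσ' huv) (hA σ') (hB σ')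
    (hpos σ' hσ') hs

lemma postMean_rescale_two_mul_sub (hfX : IsDensity fX) (hfXsym : SymmAbout μ fX)
    (hfε : IsDensity fε) (hfεsym : SymmAbout 0 fε) (hfεlc : LogConcaveFn fε) (hτ : 0 < τ) :
    postMean fX (rescale fε τ) (2 * μ - s) = 2 * μ - postMean fX (rescale fε τ) s :=
  postMean_two_mul_sub hfXsym (hfεsym.rescale τ)
    (hfε.integrable_mul_rescale hfεlc hfεsym hfX.integrable_s4 τ s)
    (hfε.integrable_mul_rescale hfεlc hfεsym hfX.integrable_id_mul_s4 τ s)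
    (hfX.integral_mul_rescale_pos hfε hfεlc hfεsym hτ s)

end RescaledNoise

theorem locscale_comparative_statics_general
    (fX fε : ℝ → ℝ) (μ : ℝ)
    (hfX : IsDensity fX) (hfXsym : SymmAbout μ fX) (hfXlc : LogConcaveFn fX)
    (hfε : IsDensity fε) (hfεsym : SymmAbout 0 fε) (hfεlc : LogConcaveFn fε)
    (σ σ' : ℝ) (hσ : 0 < σ) (hσ' : σ < σ') :
    (∀ s ≤ μ, postMean fX (fun x => (1 / σ) * fε (x / σ)) s ≤
        postMean fX (fun x => (1 / σ') * fε (x / σ')) s ∧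
        postMean fX (fun x => (1 / σ') * fε (x / σ')) s ≤ μ) ∧
    (∀ s, μ ≤ s → μ ≤ postMean fX (fun x => (1 / σ') * fε (x / σ')) s ∧
        postMean fX (fun x => (1 / σ') * fε (x / σ')) s ≤
        postMean fX (fun x => (1 / σ) * fε (x / σ)) s) := by
  have below : ∀ s ≤ μ, postMean fX (rescale fε σ) s ≤ postMean fX (rescale fε σ') s ∧
      postMean fX (rescale fε σ') s ≤ μ := fun s hs =>
    postMean_rescale_le_rescale_le hfX hfXsym hfXlc hfε hfεsym hfεlc hσ hσ'.le hs
  refine ⟨below, fun s hs => ?_⟩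
  show μ ≤ postMean fX (rescale fε σ') s ∧
    postMean fX (rescale fε σ') s ≤ postMean fX (rescale fε σ) s
  have h := below (2 * μ - s) (by linarith)
  rw [postMean_rescale_two_mul_sub hfX hfXsym hfε hfεsym hfεlc hσ,
    postMean_rescale_two_mul_sub hfX hfXsym hfε hfεsym hfεlc (hσ.trans hσ')] at h
  constructor <;> linarith

/-- Corollary 1: comparative statics in the scale parameter. -/
theorem locscale_comparative_statics
    (fX fε : ℝ → ℝ) (μ : ℝ)
    (hfX : IsDensity fX) (hfXsym : SymmAbout μ fX) (hfXlc : LogConcaveFn fX)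
    (hμ : μ = ∫ x, x * fX x)
    (hfε : IsDensity fε) (hfεsym : SymmAbout 0 fε) (hfεlc : LogConcaveFn fε)
    (σ σ' : ℝ) (hσ : 0 < σ) (hσ' : σ < σ') :
    (∀ s ≤ μ, postMean fX (fun x => (1 / σ) * fε (x / σ)) s ≤
        postMean fX (fun x => (1 / σ') * fε (x / σ')) s ∧
        postMean fX (fun x => (1 / σ') * fε (x / σ')) s ≤ μ) ∧
    (∀ s, μ ≤ s → μ ≤ postMean fX (fun x => (1 / σ') * fε (x / σ')) s ∧
        postMean fX (fun x => (1 / σ') * fε (x / σ')) s ≤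
        postMean fX (fun x => (1 / σ) * fε (x / σ)) s) :=
  locscale_comparative_statics_general fX fε μ hfX hfXsym hfXlc hfε hfεsym hfεlc σ σ' hσ hσ'
end
end

section
/- A more precise prior attenuates updating (Corollary 2). Let f_ε be a log-concave density symmetric about 0. Let f_X and f_X̃ be quasi-concave densities, both symmetric about the same mean μ, such that f_X̃ is more precise than f_X, i.e., x ↦ f_X(μ+x)/f_X̃(μ+x) is nondecreasing on (0,∞). For a prior density h, let E_h[X|S=s] denote the posterior mean under prior h and noise density f_ε. Then for every s ≤ μ, E_{f_X}[X|S=s] ≤ E_{f_X̃}[X|S=s] ≤ μ, and for every s ≥ μ, E_{f_X}[X|S=s] ≥ E_{f_X̃}[X|S=s] ≥ μ. -/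
/-!
Centre everything at `μ` and write `c = s - μ`, `g` for the centred prior. Folding the
posterior-mean integrals at `0` (using the symmetry of `g`) gives
`E[X | S = s] - μ = -(∫_{y>0} k g) / (∫_{y>0} w g)` with
`k y = y (fε (c + y) - fε (c - y))` and `w y = fε (c - y) + fε (c + y)`. For `c ≤ 0`, symmetry
and log-concavity of `fε` make `k ≥ 0` and `k / w` nondecreasing (a total-positivity
inequality), so the posterior mean lies below `μ`, and if `g / g'` is nondecreasing as well,
Chebyshev's integral inequality for the two monotone ratios orders the two posterior means.
The case `s ≥ μ` follows by reflecting `c ↦ -c`.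
-/

open MeasureTheory Real Set

noncomputable section

theorem ConcaveOn.add_le_add_of_add_eq_s5 {s : Set ℝ} {L : ℝ → ℝ} (hL : ConcaveOn ℝ s L)
    {a b c d : ℝ} (ha : a ∈ s) (hd : d ∈ s) (hab : a ≤ b) (hac : a ≤ c)
    (habcd : a + d = b + c) : L a + L d ≤ L b + L c := by
  rcases (show a ≤ d by linarith).eq_or_lt with rfl | had
  · obtain rfl : b = a := by linarith
    obtain rfl : c = b := by linarith
    rfl
  -- `b` and `c` are the convex combinations of `a` and `d` with weights `(1 - t, t)`, `(t, 1 - t)`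
  set t := (b - a) / (d - a)
  have ht : t * (d - a) = b - a := div_mul_cancel₀ _ (sub_pos.2 had).ne'
  have ht0 : 0 ≤ t := div_nonneg (by linarith) (by linarith)
  have ht1 : t ≤ 1 := (div_le_one (by linarith)).2 (by linarith)
  have hb := hL.2 ha hd (sub_nonneg.2 ht1) ht0 (sub_add_cancel 1 t)
  have hc := hL.2 ha hd ht0 (sub_nonneg.2 ht1) (add_sub_cancel t 1)
  simp only [smul_eq_mul] at hb hc
  rw [show (1 - t) * a + t * d = b by linear_combination ht] at hb
  rw [show t * a + (1 - t) * d = c by linear_combination habcd - ht] at hc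
  linarith

structure IsSymmLogConcaveNoise (f : ℝ → ℝ) : Prop where
  pos : ∀ x, 0 < f x
  even : ∀ x, f (-x) = f x
  logConcave : LogConcaveFn f
  continuous : Continuous f

namespace IsSymmLogConcaveNoise

variable {f : ℝ → ℝ} (hf : IsSymmLogConcaveNoise f)
include hf

theorem abs_le (x : ℝ) : |f x| ≤ f 0 := by
  have := hf.logConcave.2 (mem_univ x) (mem_univ (-x)) (by norm_num : (0 : ℝ) ≤ 1 / 2)
    (by norm_num : (0 : ℝ) ≤ 1 / 2) (by norm_num)
  simp only [smul_eq_mul, hf.even] at this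
  rw [show 1 / 2 * x + 1 / 2 * -x = 0 by ring] at this
  rw [abs_of_pos (hf.pos x), ← log_le_log_iff (hf.pos x) (hf.pos 0)]
  linarith

theorem mul_le_mul_of_nonpos {c y z : ℝ} (hc : c ≤ 0) (hzy : z ≤ y) :
    f (c - y) * f (c + z) ≤ f (c - z) * f (c + y) := by
  have h := hf.logConcave.add_le_add_of_add_eq_s5 (mem_univ (c + z)) (mem_univ (y - c))
    (b := c + y) (c := z - c) (by linarith) (by linarith) (by ring)
  rw [← hf.even (y - c), ← hf.even (z - c), neg_sub, neg_sub] at h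
  rw [← log_le_log_iff (mul_pos (hf.pos _) (hf.pos _)) (mul_pos (hf.pos _) (hf.pos _)),
    log_mul (hf.pos _).ne' (hf.pos _).ne', log_mul (hf.pos _).ne' (hf.pos _).ne']
  linarith

theorem apply_sub_le_apply_add {c y : ℝ} (hc : c ≤ 0) (hy : 0 ≤ y) :
    f (c - y) ≤ f (c + y) := by
  have h := hf.mul_le_mul_of_nonpos hc hy
  rw [sub_zero, add_zero, mul_comm] at h
  exact le_of_mul_le_mul_left h (hf.pos c)

theorem monotoneOn_mul_sub_div_add {c : ℝ} (hc : c ≤ 0) :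
    MonotoneOn (fun y => y * (f (c + y) - f (c - y)) / (f (c - y) + f (c + y))) (Ioi 0) := by
  have hratio : Monotone fun y => (f (c + y) - f (c - y)) / (f (c - y) + f (c + y)) := by
    intro z y hzy
    rw [div_le_div_iff₀ (add_pos (hf.pos _) (hf.pos _)) (add_pos (hf.pos _) (hf.pos _))]
    linear_combination 2 * hf.mul_le_mul_of_nonpos hc hzy
  have := (monotoneOn_id (s := Ioi (0 : ℝ))).mul (hratio.monotoneOn _) (fun y hy => le_of_lt hy)
    fun y hy => div_nonneg (sub_nonneg.2 (hf.apply_sub_le_apply_add hc (le_of_lt hy)))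
      (add_pos (hf.pos _) (hf.pos _)).le
  simp only [mul_div_assoc]
  exact this

theorem integrable_mul_comp_sub {u : ℝ → ℝ} (hu : Integrable u) (c : ℝ) :
    Integrable fun x => u x * f (c - x) :=
  hu.mul_bdd (hf.continuous.comp (continuous_const.sub continuous_id)).aestronglyMeasurable
    (ae_of_all _ fun x => hf.abs_le (c - x))

theorem integrable_mul_comp_add {u : ℝ → ℝ} (hu : Integrable u) (c : ℝ) :
    Integrable fun x => u x * f (c + x) :=
  hu.mul_bdd (hf.continuous.comp (continuous_const.add continuous_id)).aestronglyMeasurable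
    (ae_of_all _ fun x => hf.abs_le (c + x))

end IsSymmLogConcaveNoise

section MonotoneRatio

variable {α : Type*} [LinearOrder α] {s : Set α} {g g' k w : α → ℝ}

theorem mul_sub_mul_nonneg_of_monotoneOn_div (hg' : ∀ x ∈ s, 0 < g' x)
    (hw : ∀ x ∈ s, 0 < w x)
    (hgg' : MonotoneOn (fun x => g x / g' x) s) (hkw : MonotoneOn (fun x => k x / w x) s)
    {x y : α} (hx : x ∈ s) (hy : y ∈ s) :
    0 ≤ (k x * w y - k y * w x) * (g x * g' y - g y * g' x) := by
  have cross {u v : α → ℝ} (hv : ∀ x ∈ s, 0 < v x)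
      (huv : MonotoneOn (fun x => u x / v x) s)
      {x y : α} (hx : x ∈ s) (hy : y ∈ s) (hxy : x ≤ y) : u x * v y ≤ u y * v x :=
    (div_le_div_iff₀ (hv x hx) (hv y hy)).1 (huv hx hy hxy)
  rcases le_total x y with hxy | hyx
  · exact mul_nonneg_of_nonpos_of_nonpos (sub_nonpos.2 (cross hw hkw hx hy hxy))
      (sub_nonpos.2 (cross hg' hgg' hx hy hxy))
  · exact mul_nonneg (sub_nonneg.2 (cross hw hkw hy hx hyx))
      (sub_nonneg.2 (cross hg' hgg' hy hx hyx))

/-- Chebyshev's integral inequality for two nondecreasing likelihood ratios `g / g'` and `k / w`. -/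
theorem setIntegral_mul_mul_le_of_monotoneOn_div [MeasurableSpace α] {ν : Measure α} [SFinite ν]
    (hs : MeasurableSet s) (hg' : ∀ x ∈ s, 0 < g' x) (hw : ∀ x ∈ s, 0 < w x)
    (hgg' : MonotoneOn (fun x => g x / g' x) s) (hkw : MonotoneOn (fun x => k x / w x) s)
    (hkg : IntegrableOn (fun x => k x * g x) s ν) (hkg' : IntegrableOn (fun x => k x * g' x) s ν)
    (hwg : IntegrableOn (fun x => w x * g x) s ν)
    (hwg' : IntegrableOn (fun x => w x * g' x) s ν) :
    (∫ x in s, k x * g' x ∂ν) * ∫ x in s, w x * g x ∂ν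
      ≤ (∫ x in s, k x * g x ∂ν) * ∫ x in s, w x * g' x ∂ν := by
  have hpos : 0 ≤ ∫ p, ((k p.1 * g p.1) * (w p.2 * g' p.2) - (k p.1 * g' p.1) * (w p.2 * g p.2)
      - ((w p.1 * g p.1) * (k p.2 * g' p.2) - (w p.1 * g' p.1) * (k p.2 * g p.2)))
      ∂((ν.restrict s).prod (ν.restrict s)) := by
    rw [Measure.prod_restrict]
    refine integral_nonneg_of_ae ((ae_restrict_iff' (hs.prod hs)).2 (ae_of_all _ fun p hp => ?_))
    exact (mul_sub_mul_nonneg_of_monotoneOn_div hg' hw hgg' hkw hp.1 hp.2).trans_eq (by ring)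
  rw [integral_sub, integral_sub (hkg.mul_prod hwg') (hkg'.mul_prod hwg),
    integral_sub (hwg.mul_prod hkg') (hwg'.mul_prod hkg)] at hpos
  · rw [integral_prod_mul (fun x => k x * g x) (fun x => w x * g' x),
      integral_prod_mul (fun x => k x * g' x) (fun x => w x * g x),
      integral_prod_mul (fun x => w x * g x) (fun x => k x * g' x),
      integral_prod_mul (fun x => w x * g' x) (fun x => k x * g x)] at hpos
    linarith
  · exact (hkg.mul_prod hwg').sub (hkg'.mul_prod hwg)
  · exact (hwg.mul_prod hkg').sub (hwg'.mul_prod hkg)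

end MonotoneRatio

theorem integral_eq_setIntegral_Ioi_add_comp_neg {G : ℝ → ℝ} (hG : Integrable G) :
    ∫ x, G x = ∫ x in Ioi 0, (G x + G (-x)) := by
  rw [integral_add hG.integrableOn hG.comp_neg.integrableOn, integral_comp_neg_Ioi, neg_zero,
    add_comm, intervalIntegral.integral_Iic_add_Ioi hG.integrableOn hG.integrableOn]

structure IsEvenPrior (g : ℝ → ℝ) : Prop where
  pos : ∀ x, 0 < g x
  even : ∀ x, g (-x) = g x
  continuous : Continuous g
  integrable : Integrable g
  integrable_id_mul : Integrable fun x => x * g x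

theorem IsDensity.isEvenPrior_comp_add {h : ℝ → ℝ} {μ : ℝ} (hd : IsDensity h)
    (hs : SymmAbout μ h) : IsEvenPrior fun y => h (μ + y) := by
  obtain ⟨hpos, hC1, hint, hmom⟩ := hd
  have hh : Integrable h := integrable_of_integral_eq_one hint
  have hxh : Integrable fun x => x * h x :=
    (integrable_norm_iff (continuous_id.mul hC1.continuous).aestronglyMeasurable).1
      (hmom.congr (ae_of_all _ fun x => by simp [abs_of_pos (hpos x)]))
  refine ⟨fun y => hpos _, fun y => by rw [← sub_eq_add_neg, hs],
    hC1.continuous.comp (continuous_const.add continuous_id), hh.comp_add_left μ, ?_⟩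
  exact ((hxh.comp_add_left μ).sub ((hh.comp_add_left μ).const_mul μ)).congr
    (ae_of_all _ fun y => by simp only [Pi.sub_apply]; ring)

namespace IsEvenPrior

variable {f g : ℝ → ℝ} (hg : IsEvenPrior g) (hf : IsSymmLogConcaveNoise f) (c : ℝ)
include hg hf

theorem integral_mul_comp_sub_pos : 0 < ∫ x, g x * f (c - x) :=
  integral_pos_of_integrable_nonneg_nonzero (x := 0)
    (hg.continuous.mul (hf.continuous.comp (continuous_const.sub continuous_id)))
    (hf.integrable_mul_comp_sub hg.integrable c) (fun x => (mul_pos (hg.pos x) (hf.pos _)).le)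
    (mul_pos (hg.pos 0) (hf.pos _)).ne'

theorem integral_mul_comp_sub_eq :
    ∫ x, g x * f (c - x) = ∫ y in Ioi 0, (f (c - y) + f (c + y)) * g y := by
  rw [integral_eq_setIntegral_Ioi_add_comp_neg (hf.integrable_mul_comp_sub hg.integrable c)]
  congr 1 with y
  rw [hg.even, sub_neg_eq_add]
  ring

theorem integral_id_mul_mul_comp_sub_eq :
    ∫ x, x * g x * f (c - x) = -∫ y in Ioi 0, y * (f (c + y) - f (c - y)) * g y := by
  rw [integral_eq_setIntegral_Ioi_add_comp_neg (hf.integrable_mul_comp_sub hg.integrable_id_mul c),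
    ← integral_neg]
  congr 1 with y
  rw [hg.even, sub_neg_eq_add]
  ring

theorem integrable_add_mul : Integrable fun y => (f (c - y) + f (c + y)) * g y :=
  ((hf.integrable_mul_comp_sub hg.integrable c).add
    (hf.integrable_mul_comp_add hg.integrable c)).congr
    (ae_of_all _ fun y => by simp only [Pi.add_apply]; ring)

theorem integrable_id_mul_sub_mul : Integrable fun y => y * (f (c + y) - f (c - y)) * g y :=
  ((hf.integrable_mul_comp_add hg.integrable_id_mul c).sub
    (hf.integrable_mul_comp_sub hg.integrable_id_mul c)).congr
    (ae_of_all _ fun y => by simp only [Pi.sub_apply]; ring)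

variable {c}

theorem postMean_nonpos (hc : c ≤ 0) : postMean g f c ≤ 0 := by
  rw [postMean, hg.integral_id_mul_mul_comp_sub_eq hf]
  refine div_nonpos_of_nonpos_of_nonneg (neg_nonpos.2 (setIntegral_nonneg measurableSet_Ioi
    fun y hy => ?_)) (hg.integral_mul_comp_sub_pos hf c).le
  exact mul_nonneg (mul_nonneg (le_of_lt hy)
    (sub_nonneg.2 (hf.apply_sub_le_apply_add hc (le_of_lt hy)))) (hg.pos y).le

theorem postMean_le_postMean_of_monotoneOn_div {g' : ℝ → ℝ} (hg' : IsEvenPrior g')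
    (hgg' : MonotoneOn (fun x => g x / g' x) (Ioi 0)) (hc : c ≤ 0) :
    postMean g f c ≤ postMean g' f c := by
  rw [postMean, postMean, div_le_div_iff₀ (hg.integral_mul_comp_sub_pos hf c)
      (hg'.integral_mul_comp_sub_pos hf c), hg.integral_id_mul_mul_comp_sub_eq hf,
    hg'.integral_id_mul_mul_comp_sub_eq hf, hg.integral_mul_comp_sub_eq hf,
    hg'.integral_mul_comp_sub_eq hf]
  have := setIntegral_mul_mul_le_of_monotoneOn_div measurableSet_Ioi (fun x _ => hg'.pos x)
    (fun x _ => add_pos (hf.pos _) (hf.pos _)) hgg' (hf.monotoneOn_mul_sub_div_add hc)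
    (hg.integrable_id_mul_sub_mul hf c).integrableOn
    (hg'.integrable_id_mul_sub_mul hf c).integrableOn
    (hg.integrable_add_mul hf c).integrableOn (hg'.integrable_add_mul hf c).integrableOn
  linarith

end IsEvenPrior

theorem postMean_neg {f g : ℝ → ℝ} (hg : ∀ x, g (-x) = g x) (hf : ∀ x, f (-x) = f x)
    (c : ℝ) :
    postMean g f (-c) = -postMean g f c := by
  have hflip : ∀ x, f (-c - -x) = f (c - x) := fun x => by rw [← hf]; ring_nf
  rw [postMean, postMean, ← integral_neg_eq_self (fun x => x * g x * f (-c - x)),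
    ← integral_neg_eq_self (fun x => g x * f (-c - x)), ← neg_div, ← integral_neg]
  simp only [hg, hflip, neg_mul]

theorem postMean_eq_add_postMean_comp_add {f h : ℝ → ℝ} {μ : ℝ}
    (hg : IsEvenPrior fun y => h (μ + y)) (hf : IsSymmLogConcaveNoise f) (s : ℝ) :
    postMean h f s = μ + postMean (fun y => h (μ + y)) f (s - μ) := by
  have hD := hg.integral_mul_comp_sub_pos hf (s - μ)
  have hN : ∫ x, x * h x * f (s - x) = μ * (∫ y, h (μ + y) * f (s - μ - y))
      + ∫ y, y * h (μ + y) * f (s - μ - y) := by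
    rw [← integral_const_mul, ← integral_add
        ((hf.integrable_mul_comp_sub hg.integrable _).const_mul μ)
        (hf.integrable_mul_comp_sub hg.integrable_id_mul _),
      ← integral_add_left_eq_self (fun x => x * h x * f (s - x)) μ]
    congr 1 with y
    ring_nf
  rw [postMean, postMean, hN, ← integral_add_left_eq_self (fun x => h x * f (s - x)) μ]
  simp only [sub_sub] at hD ⊢
  rw [add_div, mul_div_cancel_right₀ _ hD.ne']

theorem more_precise_prior_attenuates_general
    (fε fX fX' : ℝ → ℝ) (μ : ℝ)
    (hfε : IsDensity fε) (hfεsym : SymmAbout 0 fε) (hfεlc : LogConcaveFn fε)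
    (hfX : IsDensity fX) (hfXsym : SymmAbout μ fX)
    (hfX' : IsDensity fX') (hfX'sym : SymmAbout μ fX')
    (hprec : MonotoneOn (fun x => fX (μ + x) / fX' (μ + x)) (Set.Ioi 0)) :
    (∀ s ≤ μ, postMean fX fε s ≤ postMean fX' fε s ∧ postMean fX' fε s ≤ μ) ∧
    (∀ s, μ ≤ s → μ ≤ postMean fX' fε s ∧ postMean fX' fε s ≤ postMean fX fε s) := by
  have hf : IsSymmLogConcaveNoise fε :=
    ⟨hfε.1, fun x => by simpa using (hfεsym x).symm, hfεlc, hfε.2.1.continuous⟩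
  have hg := hfX.isEvenPrior_comp_add hfXsym
  have hg' := hfX'.isEvenPrior_comp_add hfX'sym
  have centred (c : ℝ) (hc : c ≤ 0) :
      postMean (fun y => fX (μ + y)) fε c ≤ postMean (fun y => fX' (μ + y)) fε c ∧
        postMean (fun y => fX' (μ + y)) fε c ≤ 0 :=
    ⟨hg.postMean_le_postMean_of_monotoneOn_div hf hg' hprec hc, hg'.postMean_nonpos hf hc⟩
  simp only [postMean_eq_add_postMean_comp_add hg hf, postMean_eq_add_postMean_comp_add hg' hf]
  refine ⟨fun s hs => ?_, fun s hs => ?_⟩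
  · have := centred (s - μ) (by linarith)
    constructor <;> linarith
  · have := centred (-(s - μ)) (by linarith)
    rw [postMean_neg hg.even hf.even, postMean_neg hg'.even hf.even] at this
    constructor <;> linarith

/-- Corollary 2: a more precise prior attenuates updating. -/
theorem more_precise_prior_attenuates
    (fε fX fX' : ℝ → ℝ) (μ : ℝ)
    (hfε : IsDensity fε) (hfεsym : SymmAbout 0 fε) (hfεlc : LogConcaveFn fε)
    (hfX : IsDensity fX) (hfXsym : SymmAbout μ fX) (hfXqc : QuasiConcaveFn fX)
    (hfX' : IsDensity fX') (hfX'sym : SymmAbout μ fX') (hfX'qc : QuasiConcaveFn fX')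
    (hμ : μ = ∫ x, x * fX x) (hμ' : μ = ∫ x, x * fX' x)
    (hprec : MonotoneOn (fun x => fX (μ + x) / fX' (μ + x)) (Set.Ioi 0)) :
    (∀ s ≤ μ, postMean fX fε s ≤ postMean fX' fε s ∧ postMean fX' fε s ≤ μ) ∧
    (∀ s, μ ≤ s → μ ≤ postMean fX' fε s ∧ postMean fX' fε s ≤ postMean fX fε s) :=
  more_precise_prior_attenuates_general fε fX fX' μ hfε hfεsym hfεlc hfX hfXsym hfX' hfX'sym hprec
end
end
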